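/- arXiv:1706.04048 — 7 statements merged into one kernel-verified Lean document; each statement's English description precedes it below -/
import Mathlib

section
/- Let ν : ℝ → ℝⁿ → ℝⁿ be an admissible time-dependent vector field. Then for every s ∈ [0,1] and every x ∈ ℝⁿ there exists a unique continuous curve ψ : [0,1] → ℝⁿ satisfying the flow equation in integral form ψ(t) = x + ∫_s^t ν(r, ψ(r)) dr for all t ∈ [0,1]. -/
/-!
Picard iteration in `C([0,1], E)` with the sup metric. Since the Lipschitz bound `ℓ` is only
integrable, the Picard map need not be a contraction; but by induction its `k`-th iterate moves
two curves apart, at time `t`, by at most `|∫ₛᵗ ℓ|ᵏ / k!` times their distance, the step being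
`∫ₛᵗ ℓ(r) |∫ₛʳ ℓ|ᵏ dr = |∫ₛᵗ ℓ|ᵏ⁺¹ / (k+1)` (the fundamental theorem of calculus for the
absolutely continuous primitive of `ℓ`). So some iterate is a contraction and Banach's fixed point
theorem gives existence and uniqueness. Measurability of `r ↦ ν r (ψ r)` comes from approximating
`ψ` by simple functions.
-/

open MeasureTheory Set Filter Topology Interval unitInterval

theorem AbsolutelyContinuousOnInterval.fun_pow {f : ℝ → ℝ} {a b : ℝ}
    (hf : AbsolutelyContinuousOnInterval f a b) (n : ℕ) :
    AbsolutelyContinuousOnInterval (fun x => f x ^ n) a b := by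
  induction n with
  | zero => simpa using (LipschitzWith.const (1 : ℝ)).lipschitzOnWith.absolutelyContinuousOnInterval
  | succ n ih => simpa only [pow_succ] using ih.fun_mul hf

theorem intervalIntegral.integral_mul_pow_primitive {ℓ : ℝ → ℝ} {a b : ℝ}
    (hℓ : IntervalIntegrable ℓ volume a b) (k : ℕ) :
    ∫ r in a..b, ℓ r * (∫ u in a..r, ℓ u) ^ k = (∫ u in a..b, ℓ u) ^ (k + 1) / (k + 1) := by
  have hAC := (hℓ.absolutelyContinuousOnInterval_intervalIntegral left_mem_uIcc).fun_pow (k + 1)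
  have hFTC := (hAC.const_mul ((k : ℝ) + 1)⁻¹).integral_deriv_eq_sub
  simp only [intervalIntegral.integral_same, zero_pow (Nat.succ_ne_zero k), mul_zero,
    sub_zero] at hFTC
  rw [inv_mul_eq_div] at hFTC
  rw [← hFTC]
  refine intervalIntegral.integral_congr_ae ?_
  filter_upwards [hℓ.ae_hasDerivAt_integral] with r hr hr'
  have := ((hr (uIoc_subset_uIcc hr') a left_mem_uIcc).fun_pow (k + 1)).const_mul ((k : ℝ) + 1)⁻¹
  rw [this.deriv]
  push_cast
  field_simp

theorem setIntegral_uIoc_mul_abs_pow_primitive {ℓ : ℝ → ℝ} {a b : ℝ}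
    (hℓ : IntervalIntegrable ℓ volume a b) (hℓ0 : ∀ r ∈ uIcc a b, 0 ≤ ℓ r) (k : ℕ) :
    ∫ r in Ι a b, ℓ r * |∫ u in a..r, ℓ u| ^ k = |∫ u in a..b, ℓ u| ^ (k + 1) / (k + 1) := by
  rcases le_total a b with hab | hba
  · have habs : ∀ r ∈ Icc a b, |∫ u in a..r, ℓ u| = ∫ u in a..r, ℓ u := fun r hr =>
      abs_of_nonneg <| intervalIntegral.integral_nonneg hr.1 fun u hu =>
        hℓ0 u (Icc_subset_uIcc (Icc_subset_Icc_right hr.2 hu))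
    rw [uIoc_of_le hab, ← intervalIntegral.integral_of_le hab, habs b ⟨hab, le_rfl⟩,
      ← intervalIntegral.integral_mul_pow_primitive hℓ]
    refine intervalIntegral.integral_congr fun r hr => ?_
    rw [uIcc_of_le hab] at hr
    simp only [habs r hr]
  · -- here the primitive is nonpositive, so `-ℓ` has the nonnegative primitive `|∫ₐʳ ℓ|`
    have habs : ∀ r ∈ Icc b a, |∫ u in a..r, ℓ u| = ∫ u in a..r, -ℓ u := fun r hr => by
      rw [intervalIntegral.integral_neg, intervalIntegral.integral_symm r a, abs_neg, neg_neg]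
      exact abs_of_nonneg <| intervalIntegral.integral_nonneg hr.2 fun u hu =>
        hℓ0 u (Icc_subset_uIcc' (Icc_subset_Icc_left hr.1 hu))
    rw [uIoc_of_ge hba, habs b ⟨le_rfl, hba⟩,
      ← intervalIntegral.integral_mul_pow_primitive (ℓ := fun u => -ℓ u) hℓ.neg,
      intervalIntegral.integral_of_ge hba, ← integral_neg]
    refine setIntegral_congr_fun measurableSet_Ioc fun r hr => ?_
    simp only [habs r (Ioc_subset_Icc_self hr), neg_mul, neg_neg]

theorem abs_intervalIntegral_le_setIntegral_Icc {f : ℝ → ℝ} {a b s t : ℝ}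
    (hf : IntegrableOn f (Icc a b)) (hf0 : ∀ r ∈ Icc a b, 0 ≤ f r) (hs : s ∈ Icc a b)
    (ht : t ∈ Icc a b) : |∫ r in s..t, f r| ≤ ∫ r in Icc a b, f r := by
  have hsub : Ι s t ⊆ Icc a b := uIoc_subset_uIcc.trans (uIcc_subset_Icc hs ht)
  calc |∫ r in s..t, f r| ≤ ∫ r in Ι s t, ‖f r‖ :=
        intervalIntegral.norm_integral_le_integral_norm_uIoc (f := f)
    _ = ∫ r in Ι s t, f r :=
        setIntegral_congr_fun measurableSet_uIoc fun r hr => abs_of_nonneg (hf0 r (hsub hr))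
    _ ≤ ∫ r in Icc a b, f r :=
        setIntegral_mono_set hf ((ae_restrict_iff' measurableSet_Icc).2 (.of_forall hf0))
          hsub.eventuallyLE

section Caratheodory

variable {α E F : Type*} [MeasurableSpace α] {μ : Measure α} [TopologicalSpace F]
  [TopologicalSpace.PseudoMetrizableSpace F] {f : α → E → F}

theorem MeasureTheory.SimpleFunc.aestronglyMeasurable_comp_apply (φ : SimpleFunc α E)
    (hf : ∀ x, AEStronglyMeasurable (f · x) μ) :
    AEStronglyMeasurable (fun t => f t (φ t)) μ := by
  have hcover : (⋃ y : φ.range, φ ⁻¹' {(y : E)}) = univ := by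
    ext t; simp
  rw [← Measure.restrict_univ (μ := μ), ← hcover, aestronglyMeasurable_iUnion_iff]
  intro y
  refine ((hf y).mono_measure Measure.restrict_le_self).congr ?_
  filter_upwards [ae_restrict_mem (φ.measurableSet_fiber y)] with t ht
  rw [ht]

theorem MeasureTheory.AEStronglyMeasurable.comp_apply_of_ae_continuous [TopologicalSpace E]
    {g : α → E} (hg : AEStronglyMeasurable g μ) (hf : ∀ x, AEStronglyMeasurable (f · x) μ)
    (hf_cont : ∀ᵐ t ∂μ, Continuous (f t)) :
    AEStronglyMeasurable (fun t => f t (g t)) μ := by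
  refine aestronglyMeasurable_of_tendsto_ae atTop
    (fun n => (hg.stronglyMeasurable_mk.approx n).aestronglyMeasurable_comp_apply hf) ?_
  filter_upwards [hf_cont, hg.ae_eq_mk] with t ht hgt
  rw [hgt]
  exact (ht.tendsto _).comp (hg.stronglyMeasurable_mk.tendsto_approx t)

end Caratheodory

variable {E : Type*} [NormedAddCommGroup E]

structure IsAdmissible (ν : ℝ → E → E) (ℓ b : ℝ → ℝ) : Prop where
  aestronglyMeasurable : ∀ x, AEStronglyMeasurable (ν · x) (volume.restrict I)
  integrableOn_lipschitz : IntegrableOn ℓ I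
  integrableOn_bound : IntegrableOn b I
  lipschitz_nonneg : ∀ t ∈ I, 0 ≤ ℓ t
  norm_sub_le : ∀ t ∈ I, ∀ x y, ‖ν t x - ν t y‖ ≤ ℓ t * ‖x - y‖
  norm_le : ∀ t ∈ I, ∀ x, ‖ν t x‖ ≤ b t

namespace IsAdmissible

variable {ν : ℝ → E → E} {ℓ b : ℝ → ℝ} (hν : IsAdmissible ν ℓ b)
include hν

theorem continuous {t : ℝ} (ht : t ∈ I) : Continuous (ν t) :=
  (LipschitzWith.of_dist_le_mul (K := ⟨ℓ t, hν.lipschitz_nonneg t ht⟩) fun x y => by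
    rw [dist_eq_norm, dist_eq_norm]; exact hν.norm_sub_le t ht x y).continuous

theorem integrableOn_comp {γ : ℝ → E} (hγ : ContinuousOn γ I) :
    IntegrableOn (fun r => ν r (γ r)) I := by
  refine hν.integrableOn_bound.mono' ?_ ?_
  · exact (hγ.aestronglyMeasurable measurableSet_Icc).comp_apply_of_ae_continuous
      hν.aestronglyMeasurable
      ((ae_restrict_iff' measurableSet_Icc).2 (.of_forall fun t ht => hν.continuous ht))
  · filter_upwards [ae_restrict_mem measurableSet_Icc] with t ht
    exact hν.norm_le t ht _

theorem intervalIntegrable_comp {γ : ℝ → E} (hγ : ContinuousOn γ I) {s t : ℝ} (hs : s ∈ I)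
    (ht : t ∈ I) : IntervalIntegrable (fun r => ν r (γ r)) volume s t :=
  ((hν.integrableOn_comp hγ).mono_set (uIcc_subset_Icc hs ht)).intervalIntegrable

variable [NormedSpace ℝ E] {s : ℝ} (hs : s ∈ I) (x : E)

/-- Curves on `I` are extended to `ℝ` by `IccExtend` so that `r ↦ ν r (ψ r)` can be integrated
over `s..t`; only their values on `I` enter. -/
noncomputable def picard (ψ : C(I, E)) : C(I, E) where
  toFun t := x + ∫ r in s..t, ν r (IccExtend zero_le_one ψ r)
  continuous_toFun := by
    have hint := hν.intervalIntegrable_comp (γ := IccExtend zero_le_one ψ)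
      ψ.continuous.Icc_extend'.continuousOn zero_mem one_mem
    refine continuous_const.add ?_
    have := intervalIntegral.continuousOn_primitive_interval' hint (by simpa using hs)
    rw [uIcc_of_le zero_le_one] at this
    exact this.comp_continuous continuous_subtype_val Subtype.prop

theorem picard_apply (ψ : C(I, E)) (t : I) :
    hν.picard hs x ψ t = x + ∫ r in s..t, ν r (IccExtend zero_le_one ψ r) :=
  rfl

theorem norm_picard_sub_le {ψ φ : C(I, E)} {c : ℝ} {k : ℕ}
    (hψφ : ∀ r : I, ‖ψ r - φ r‖ ≤ c * |∫ u in s..r, ℓ u| ^ k) (t : I) :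
    ‖hν.picard hs x ψ t - hν.picard hs x φ t‖ ≤ c * (|∫ u in s..t, ℓ u| ^ (k + 1) / (k + 1)) := by
  have hsub : uIcc s t ⊆ I := uIcc_subset_Icc hs t.2
  have hℓ : IntegrableOn ℓ (uIcc s t) := hν.integrableOn_lipschitz.mono_set hsub
  have hint (ψ : C(I, E)) :
      IntervalIntegrable (fun r => ν r (IccExtend zero_le_one ψ r)) volume s t :=
    hν.intervalIntegrable_comp ψ.continuous.Icc_extend'.continuousOn hs t.2
  have hbound : IntegrableOn (fun r => c * (ℓ r * |∫ u in s..r, ℓ u| ^ k)) (Ι s t) :=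
    ((hℓ.mul_continuousOn ((intervalIntegral.continuousOn_primitive_interval hℓ).abs.pow k)
      isCompact_uIcc).mono_set uIoc_subset_uIcc).const_mul c
  rw [picard_apply, picard_apply, add_sub_add_left_eq_sub,
    ← intervalIntegral.integral_sub (hint ψ) (hint φ),
    intervalIntegral.norm_integral_eq_norm_integral_uIoc,
    ← setIntegral_uIoc_mul_abs_pow_primitive hℓ.intervalIntegrable
      (fun r hr => hν.lipschitz_nonneg r (hsub hr)), ← integral_const_mul]
  refine norm_integral_le_of_norm_le hbound ?_
  filter_upwards [ae_restrict_mem measurableSet_uIoc] with r hr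
  have hrI : r ∈ I := hsub (uIoc_subset_uIcc hr)
  calc ‖ν r (IccExtend zero_le_one ψ r) - ν r (IccExtend zero_le_one φ r)‖
      ≤ ℓ r * ‖ψ ⟨r, hrI⟩ - φ ⟨r, hrI⟩‖ := by
        simpa only [IccExtend_of_mem _ _ hrI] using hν.norm_sub_le r hrI _ _
    _ ≤ ℓ r * (c * |∫ u in s..r, ℓ u| ^ k) :=
        mul_le_mul_of_nonneg_left (hψφ ⟨r, hrI⟩) (hν.lipschitz_nonneg r hrI)
    _ = c * (ℓ r * |∫ u in s..r, ℓ u| ^ k) := mul_left_comm _ _ _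

theorem norm_picard_iterate_sub_le (k : ℕ) (ψ φ : C(I, E)) (t : I) :
    ‖(hν.picard hs x)^[k] ψ t - (hν.picard hs x)^[k] φ t‖ ≤
      dist ψ φ / k.factorial * |∫ u in s..t, ℓ u| ^ k := by
  induction k generalizing t with
  | zero => simpa [← dist_eq_norm] using ψ.dist_apply_le_dist (g := φ) t
  | succ k ih =>
    rw [Function.iterate_succ_apply', Function.iterate_succ_apply']
    refine (hν.norm_picard_sub_le hs x ih t).trans_eq ?_
    rw [Nat.factorial_succ]
    push_cast
    field_simp

theorem dist_picard_iterate_le (k : ℕ) (ψ φ : C(I, E)) :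
    dist ((hν.picard hs x)^[k] ψ) ((hν.picard hs x)^[k] φ) ≤
      (∫ u in I, ℓ u) ^ k / k.factorial * dist ψ φ := by
  have hΛ : 0 ≤ ∫ u in I, ℓ u := setIntegral_nonneg measurableSet_Icc hν.lipschitz_nonneg
  refine (ContinuousMap.dist_le (by positivity)).2 fun t => ?_
  rw [dist_eq_norm, div_mul_comm]
  refine (hν.norm_picard_iterate_sub_le hs x k ψ φ t).trans ?_
  gcongr
  exact abs_intervalIntegral_le_setIntegral_Icc hν.integrableOn_lipschitz hν.lipschitz_nonneg hs t.2

theorem exists_contractingWith_picard_iterate :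
    ∃ k : ℕ, ∃ K, ContractingWith K (hν.picard hs x)^[k] := by
  set Λ := ∫ u in I, ℓ u
  have hΛ : 0 ≤ Λ := setIntegral_nonneg measurableSet_Icc hν.lipschitz_nonneg
  obtain ⟨k, hk⟩ := ((FloorSemiring.tendsto_pow_div_factorial_atTop Λ).eventually_lt_const
    one_pos).exists
  exact ⟨k, ⟨Λ ^ k / k.factorial, by positivity⟩, hk,
    LipschitzWith.of_dist_le_mul (hν.dist_picard_iterate_le hs x k)⟩

theorem existsUnique_isFixedPt_picard [CompleteSpace E] :
    ∃! ψ : C(I, E), Function.IsFixedPt (hν.picard hs x) ψ := by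
  obtain ⟨k, K, hK⟩ := hν.exists_contractingWith_picard_iterate hs x
  exact ⟨_, hK.isFixedPt_fixedPoint_iterate, fun ψ hψ => hK.fixedPoint_unique (hψ.iterate k)⟩

theorem isFixedPt_picard_iff {ψ : ℝ → E} (hψ : ContinuousOn ψ I) :
    Function.IsFixedPt (hν.picard hs x) ⟨fun t : I => ψ t, hψ.domRestrict⟩ ↔
      ∀ t ∈ I, ψ t = x + ∫ r in s..t, ν r (ψ r) := by
  rw [Function.IsFixedPt, ContinuousMap.ext_iff, Subtype.forall]
  refine forall₂_congr fun t ht => ?_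
  rw [picard_apply, eq_comm]
  congr! 2
  refine intervalIntegral.integral_congr fun r hr => ?_
  rw [IccExtend_of_mem _ _ (uIcc_subset_Icc hs ht hr)]
  rfl

end IsAdmissible

theorem flow_existence_uniqueness_general
    (n : ℕ) (ν : ℝ → EuclideanSpace ℝ (Fin n) → EuclideanSpace ℝ (Fin n))
    (ℓ b : ℝ → ℝ)
    (hmeas : ∀ x, AEStronglyMeasurable (fun t => ν t x) (volume.restrict (Icc (0:ℝ) 1)))
    (hℓint : IntegrableOn ℓ (Icc (0:ℝ) 1))
    (hbint : IntegrableOn b (Icc (0:ℝ) 1))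
    (hℓ0 : ∀ t ∈ Icc (0:ℝ) 1, 0 ≤ ℓ t)
    (hlip : ∀ t ∈ Icc (0:ℝ) 1, ∀ x y, ‖ν t x - ν t y‖ ≤ ℓ t * ‖x - y‖)
    (hbd : ∀ t ∈ Icc (0:ℝ) 1, ∀ x, ‖ν t x‖ ≤ b t)
    (s : ℝ) (hs : s ∈ Icc (0:ℝ) 1) (x : EuclideanSpace ℝ (Fin n)) :
    ∃ ψ : ℝ → EuclideanSpace ℝ (Fin n),
      (ContinuousOn ψ (Icc (0:ℝ) 1) ∧
        ∀ t ∈ Icc (0:ℝ) 1, ψ t = x + ∫ r in s..t, ν r (ψ r)) ∧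
      (∀ ψ' : ℝ → EuclideanSpace ℝ (Fin n),
        (ContinuousOn ψ' (Icc (0:ℝ) 1) ∧
          ∀ t ∈ Icc (0:ℝ) 1, ψ' t = x + ∫ r in s..t, ν r (ψ' r)) →
        ∀ t ∈ Icc (0:ℝ) 1, ψ' t = ψ t) := by
  have hν : IsAdmissible ν ℓ b := ⟨hmeas, hℓint, hbint, hℓ0, hlip, hbd⟩
  obtain ⟨Φ, hΦ, hΦ_unique⟩ := hν.existsUnique_isFixedPt_picard hs x
  have hcont : ContinuousOn (IccExtend zero_le_one Φ) I := Φ.continuous.Icc_extend'.continuousOn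
  have hrestrict : (⟨fun t : I => IccExtend zero_le_one Φ t, hcont.domRestrict⟩ : C(I, _)) = Φ :=
    ContinuousMap.ext fun t => IccExtend_val _ _ t
  refine ⟨IccExtend zero_le_one Φ,
    ⟨hcont, (hν.isFixedPt_picard_iff hs x hcont).1 (by rwa [hrestrict])⟩, ?_⟩
  rintro ψ ⟨hψ, hψ_eq⟩ t ht
  rw [IccExtend_of_mem _ _ ht, ← hΦ_unique _ ((hν.isFixedPt_picard_iff hs x hψ).2 hψ_eq)]
  rfl

/-- **Existence and uniqueness of flows.**
Let `ν : ℝ → ℝⁿ → ℝⁿ` be an admissible time-dependent vector field: `t ↦ ν t x` is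
measurable on `[0,1]` for each `x`, and there are integrable `ℓ b : [0,1] → [0,∞)` with
`‖ν t x − ν t y‖ ≤ ℓ t * ‖x − y‖` and `‖ν t x‖ ≤ b t`.  Then for every `s ∈ [0,1]` and every
`x ∈ ℝⁿ` there exists a unique continuous curve `ψ : [0,1] → ℝⁿ` satisfying the flow equation
in integral form `ψ t = x + ∫_s^t ν(r, ψ r) dr` for all `t ∈ [0,1]`. -/
theorem flow_existence_uniqueness
    (n : ℕ) (ν : ℝ → EuclideanSpace ℝ (Fin n) → EuclideanSpace ℝ (Fin n))
    (ℓ b : ℝ → ℝ)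
    (hmeas : ∀ x, AEStronglyMeasurable (fun t => ν t x) (volume.restrict (Icc (0:ℝ) 1)))
    (hℓint : IntegrableOn ℓ (Icc (0:ℝ) 1))
    (hbint : IntegrableOn b (Icc (0:ℝ) 1))
    (hℓ0 : ∀ t ∈ Icc (0:ℝ) 1, 0 ≤ ℓ t)
    (hb0 : ∀ t ∈ Icc (0:ℝ) 1, 0 ≤ b t)
    (hlip : ∀ t ∈ Icc (0:ℝ) 1, ∀ x y, ‖ν t x - ν t y‖ ≤ ℓ t * ‖x - y‖)
    (hbd : ∀ t ∈ Icc (0:ℝ) 1, ∀ x, ‖ν t x‖ ≤ b t)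
    (s : ℝ) (hs : s ∈ Icc (0:ℝ) 1) (x : EuclideanSpace ℝ (Fin n)) :
    ∃ ψ : ℝ → EuclideanSpace ℝ (Fin n),
      (ContinuousOn ψ (Icc (0:ℝ) 1) ∧
        ∀ t ∈ Icc (0:ℝ) 1, ψ t = x + ∫ r in s..t, ν r (ψ r)) ∧
      (∀ ψ' : ℝ → EuclideanSpace ℝ (Fin n),
        (ContinuousOn ψ' (Icc (0:ℝ) 1) ∧
          ∀ t ∈ Icc (0:ℝ) 1, ψ' t = x + ∫ r in s..t, ν r (ψ' r)) →
        ∀ t ∈ Icc (0:ℝ) 1, ψ' t = ψ t) :=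
  flow_existence_uniqueness_general n ν ℓ b hmeas hℓint hbint hℓ0 hlip hbd s hs x
end

section
/- Let (V, j, C) be an admissible Hilbert space of vector fields, Ω ⊂ ℝⁿ a bounded measurable set, and I : ℝⁿ → ℝ a bounded continuous function (the template). For ν ∈ L²([0,1]; V) let φ_ν denote the two-parameter flow of the induced field, and define the deformed template W(ν) : Ω → ℝ by W(ν)(x) = I(φ_ν(1,0,x)) (geometric group action, since φ_ν(1,0,·) is the inverse of φ_ν(0,1,·)). If ν_k ⇀ ν weakly in L²([0,1]; V), then ∫_Ω |W(ν_k)(x) − W(ν)(x)|² dx → 0, i.e. the deformed templates converge in L²(Ω, ℝ). -/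
/-!
Fix `x` and let `f = φ_ν(1, ·, x)`, `f_k = φ_{ν_k}(1, ·, x)`. Subtracting the two integral
equations gives `‖f_k t - f t‖ ≤ ‖ε_k t‖ + ∫_t^1 C ‖ν_k‖ ‖f_k - f‖` with
`ε_k t = ∫_t^1 j (ν - ν_k) (f r) dr`. Grönwall's inequality with a variable forcing term
(integrating factor `exp ∫ C ‖ν_k‖`, fundamental theorem of calculus for absolutely continuous
functions) and Cauchy–Schwarz give `‖f_k 0 - f 0‖ ≤ ‖ε_k 0‖ + e^{CB} C B ‖ε_k‖_{L²}`, where `B`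
bounds `‖ν_k‖_{L²}` by the uniform boundedness principle. Each coordinate of `ε_k t` is `ν - ν_k`
tested against an `L²` function built from the adjoint of `v ↦ j v (f r)`, so `ε_k → 0` pointwise
and, being uniformly bounded, in `L²`. Thus the deformed templates converge pointwise; the same
estimate with `ν_k = ν` makes them continuous in `x`, and dominated convergence on the bounded set
`Ω` concludes.
-/

open MeasureTheory Set Filter Topology
open scoped RealInnerProductSpace

theorem AbsolutelyContinuousOnInterval.le_of_ae_deriv_nonneg {f : ℝ → ℝ} {a b : ℝ}
    (hab : a ≤ b) (hf : AbsolutelyContinuousOnInterval f a b)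
    (hf' : ∀ᵐ x, x ∈ Icc a b → 0 ≤ deriv f x) : f a ≤ f b := by
  have hint : 0 ≤ ∫ x in a..b, deriv f x :=
    intervalIntegral.integral_nonneg_of_ae_restrict hab
      ((ae_restrict_iff' measurableSet_Icc).2 hf')
  linarith [hf.integral_deriv_eq_sub]

theorem LipschitzOnWith.comp_absolutelyContinuousOnInterval {X Y : Type*} [PseudoMetricSpace X]
    [PseudoMetricSpace Y] {φ : X → Y} {K : NNReal} {s : Set X} {f : ℝ → X} {a b : ℝ}
    (hφ : LipschitzOnWith K φ s) (hf : AbsolutelyContinuousOnInterval f a b)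
    (hfs : MapsTo f (uIcc a b) s) : AbsolutelyContinuousOnInterval (φ ∘ f) a b := by
  rw [absolutelyContinuousOnInterval_iff] at hf ⊢
  intro ε hε
  obtain ⟨δ, hδ, hfδ⟩ := hf (ε / (K + 1)) (by positivity)
  refine ⟨δ, hδ, fun E hE hEδ => ?_⟩
  calc ∑ i ∈ Finset.range E.1, dist (φ (f (E.2 i).1)) (φ (f (E.2 i).2))
      ≤ ∑ i ∈ Finset.range E.1, K * dist (f (E.2 i).1) (f (E.2 i).2) :=
        Finset.sum_le_sum fun i hi =>
          hφ.dist_le_mul _ (hfs (hE.1 i hi).1) _ (hfs (hE.1 i hi).2)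
    _ = K * ∑ i ∈ Finset.range E.1, dist (f (E.2 i).1) (f (E.2 i).2) := by
        rw [Finset.mul_sum]
    _ ≤ K * (ε / (K + 1)) := by gcongr; exact (hfδ E hE hEδ).le
    _ < ε := by
        rw [mul_div_assoc', div_lt_iff₀ (by positivity)]
        nlinarith

theorem Real.lipschitzOnWith_exp_Iic_zero : LipschitzOnWith 1 Real.exp (Iic 0) :=
  (convex_Iic 0).lipschitzOnWith_of_nnnorm_hasDerivWithin_le
    (fun x _ => (Real.hasDerivAt_exp x).hasDerivWithinAt) fun x hx => by
      rw [← NNReal.coe_le_coe, coe_nnnorm, Real.norm_of_nonneg (Real.exp_pos x).le]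
      simpa using Real.exp_le_one_iff.2 hx

theorem integral_mul_le_exp_mul_integral_of_le_add_integral {k g e : ℝ → ℝ} {t b : ℝ}
    (htb : t ≤ b) (hk : IntervalIntegrable k volume t b) (hk0 : ∀ r ∈ Icc t b, 0 ≤ k r)
    (he0 : ∀ r ∈ Icc t b, 0 ≤ e r)
    (hkg : IntervalIntegrable (fun r => k r * g r) volume t b)
    (hke : IntervalIntegrable (fun r => k r * e r) volume t b)
    (h : ∀ s ∈ Icc t b, g s ≤ e s + ∫ r in s..b, k r * g r) :
    ∫ r in t..b, k r * g r ≤ Real.exp (∫ r in t..b, k r) * ∫ r in t..b, k r * e r := by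
  have hb : b ∈ uIcc t b := right_mem_uIcc
  set P : ℝ → ℝ := fun s => ∫ r in b..s, k r
  set U : ℝ → ℝ := fun s => ∫ r in b..s, k r * g r
  set Q : ℝ → ℝ := fun s => ∫ r in b..s, k r * e r
  have hP : ∀ s ∈ Icc t b, P s ≤ 0 := fun s hs => by
    simp only [P]
    rw [intervalIntegral.integral_symm, neg_nonpos]
    exact intervalIntegral.integral_nonneg hs.2 fun r hr => hk0 r ⟨hs.1.trans hr.1, hr.2⟩
  -- integrating factor: `w` has a.e. derivative `k (e - exp P * (g + U)) ≥ 0`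
  set w : ℝ → ℝ := fun s => Q s - U s * Real.exp (P s)
  have hw : AbsolutelyContinuousOnInterval w t b :=
    (hke.absolutelyContinuousOnInterval_intervalIntegral hb).sub
      ((hkg.absolutelyContinuousOnInterval_intervalIntegral hb).mul
        (Real.lipschitzOnWith_exp_Iic_zero.comp_absolutelyContinuousOnInterval
          (hk.absolutelyContinuousOnInterval_intervalIntegral hb)
          fun s hs => hP s (by rwa [uIcc_of_le htb] at hs)))
  have hw' : ∀ᵐ s, s ∈ Icc t b → 0 ≤ deriv w s := by
    filter_upwards [hk.ae_hasDerivAt_integral, hkg.ae_hasDerivAt_integral,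
      hke.ae_hasDerivAt_integral] with s hPs hUs hQs hs
    have hs' : s ∈ uIcc t b := by rwa [uIcc_of_le htb]
    have hd : HasDerivAt w (k s * e s - (k s * g s * Real.exp (P s)
        + U s * (Real.exp (P s) * k s))) s :=
      (hQs hs' b hb).sub ((hUs hs' b hb).mul (hPs hs' b hb).exp)
    have hgs : g s + U s ≤ e s := by
      have := h s hs
      rw [intervalIntegral.integral_symm] at this
      linarith
    have : Real.exp (P s) * (g s + U s) ≤ e s := by
      nlinarith [Real.exp_pos (P s), Real.exp_le_one_iff.2 (hP s hs), he0 s hs]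
    rw [hd.deriv]
    nlinarith [hk0 s hs]
  have hwt := hw.le_of_ae_deriv_nonneg htb hw'
  simp only [w, Q, U, P, intervalIntegral.integral_same, zero_mul, sub_zero] at hwt
  rw [intervalIntegral.integral_symm b t, intervalIntegral.integral_symm b t,
    intervalIntegral.integral_symm b t, Real.exp_neg, le_inv_mul_iff₀ (Real.exp_pos _)]
  linarith

theorem le_add_exp_mul_integral_of_le_add_integral {k g e : ℝ → ℝ} {t b : ℝ} (htb : t ≤ b)
    (hk : IntervalIntegrable k volume t b) (hk0 : ∀ r ∈ Icc t b, 0 ≤ k r)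
    (he0 : ∀ r ∈ Icc t b, 0 ≤ e r)
    (hkg : IntervalIntegrable (fun r => k r * g r) volume t b)
    (hke : IntervalIntegrable (fun r => k r * e r) volume t b)
    (h : ∀ s ∈ Icc t b, g s ≤ e s + ∫ r in s..b, k r * g r) :
    g t ≤ e t + Real.exp (∫ r in t..b, k r) * ∫ r in t..b, k r * e r :=
  (h t ⟨le_rfl, htb⟩).trans (add_le_add le_rfl
    (integral_mul_le_exp_mul_integral_of_le_add_integral htb hk hk0 he0 hkg hke h))

section WeakL2

variable {α V : Type*} [MeasurableSpace α] {μ : Measure α} [NormedAddCommGroup V]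

theorem integral_norm_mul_le_norm_toLp_mul {f : α → V} {g : α → ℝ} (hf : MemLp f 2 μ)
    (hg : MemLp g 2 μ) : ∫ a, ‖f a‖ * g a ∂μ ≤ ‖hf.toLp f‖ * ‖hg.toLp g‖ := by
  have hnorm : ‖hf.norm.toLp (fun a => ‖f a‖)‖ = ‖hf.toLp f‖ := by
    rw [Lp.norm_toLp, Lp.norm_toLp, eLpNorm_norm]
  calc ∫ a, ‖f a‖ * g a ∂μ = ⟪hf.norm.toLp (fun a => ‖f a‖), hg.toLp g⟫ := by
        rw [L2.inner_def]
        refine integral_congr_ae ?_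
        filter_upwards [hf.norm.coeFn_toLp, hg.coeFn_toLp] with a hfa hga
        rw [hfa, hga, real_inner_eq_re_inner, RCLike.re_to_real, RCLike.inner_apply,
          conj_trivial, mul_comm]
    _ ≤ _ := hnorm ▸ real_inner_le_norm _ _

theorem integral_norm_le_norm_toLp [IsProbabilityMeasure μ] {f : α → V} (hf : MemLp f 2 μ) :
    ∫ a, ‖f a‖ ∂μ ≤ ‖hf.toLp f‖ := by
  simpa [Lp.norm_const'] using integral_norm_mul_le_norm_toLp_mul hf (memLp_const (1 : ℝ))

variable [InnerProductSpace ℝ V]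

def TendstoWeaklyL2 (μ : Measure α) (u : ℕ → α → V) (v : α → V) : Prop :=
  ∀ η : α → V, MemLp η 2 μ →
    Tendsto (fun k => ∫ a, ⟪u k a, η a⟫ ∂μ) atTop (𝓝 (∫ a, ⟪v a, η a⟫ ∂μ))

theorem MeasureTheory.MemLp.inner_toLp_eq_integral {f g : α → V} (hf : MemLp f 2 μ)
    (hg : MemLp g 2 μ) : ⟪hf.toLp f, hg.toLp g⟫ = ∫ a, ⟪f a, g a⟫ ∂μ := by
  rw [L2.inner_def]
  refine integral_congr_ae ?_
  filter_upwards [hf.coeFn_toLp, hg.coeFn_toLp] with a hfa hga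
  rw [hfa, hga]

theorem MeasureTheory.MemLp.norm_toLp_sq {f : α → V} (hf : MemLp f 2 μ) :
    ‖hf.toLp f‖ ^ 2 = ∫ a, ‖f a‖ ^ 2 ∂μ := by
  simp_rw [← real_inner_self_eq_norm_sq, hf.inner_toLp_eq_integral hf]

theorem tendsto_norm_toLp_of_dominated [IsFiniteMeasure μ] {f : ℕ → α → V}
    (hf : ∀ k, MemLp (f k) 2 μ) {M : ℝ} (hM : ∀ k, ∀ᵐ a ∂μ, ‖f k a‖ ≤ M)
    (hlim : ∀ᵐ a ∂μ, Tendsto (fun k => f k a) atTop (𝓝 0)) :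
    Tendsto (fun k => ‖(hf k).toLp (f k)‖) atTop (𝓝 0) := by
  have hsq : Tendsto (fun k => ∫ a, ‖f k a‖ ^ 2 ∂μ) atTop (𝓝 (∫ _, (0 : ℝ) ∂μ)) :=
    tendsto_integral_of_dominated_convergence (fun _ => M ^ 2)
      (fun k => ((hf k).1.norm.pow 2)) (integrable_const _)
      (fun k => (hM k).mono fun a ha => by
        rw [Real.norm_of_nonneg (by positivity)]
        exact pow_le_pow_left₀ (norm_nonneg _) ha 2)
      (hlim.mono fun a ha => by simpa using (ha.norm.pow 2))
  have := (hsq.sqrt).congr fun k => by rw [← (hf k).norm_toLp_sq, Real.sqrt_sq (norm_nonneg _)]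
  simpa using this

theorem TendstoWeaklyL2.exists_norm_toLp_le [CompleteSpace V] {u : ℕ → α → V} {v : α → V}
    (h : TendstoWeaklyL2 μ u v) (hu : ∀ k, MemLp (u k) 2 μ) :
    ∃ B, ∀ k, ‖(hu k).toLp (u k)‖ ≤ B := by
  obtain ⟨B, hB⟩ := banach_steinhaus (g := fun k => innerSL ℝ ((hu k).toLp (u k))) fun ξ => by
    have hξ : ∀ k, innerSL ℝ ((hu k).toLp (u k)) ξ = ∫ a, ⟪u k a, ξ a⟫ ∂μ := fun k => by
      rw [innerSL_apply_apply]
      conv_lhs => rw [← Lp.toLp_coeFn ξ (Lp.memLp ξ)]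
      exact (hu k).inner_toLp_eq_integral (Lp.memLp ξ)
    obtain ⟨c, hc⟩ := ((h ξ (Lp.memLp ξ)).norm).bddAbove_range
    exact ⟨c, fun k => hξ k ▸ hc ⟨k, rfl⟩⟩
  exact ⟨B, fun k => (innerSL_apply_norm ℝ _).symm.trans_le (hB k)⟩

theorem TendstoWeaklyL2.restrict {u : ℕ → α → V} {v : α → V} (h : TendstoWeaklyL2 μ u v)
    {s : Set α} (hs : MeasurableSet s) : TendstoWeaklyL2 (μ.restrict s) u v := fun η hη => by
  have hind : ∀ w : α → V,
      (fun a => ⟪w a, s.indicator η a⟫) = s.indicator fun a => ⟪w a, η a⟫ := fun w => by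
    funext a
    by_cases ha : a ∈ s <;> simp [ha]
  have := h (s.indicator η) ((memLp_indicator_iff_restrict hs).2 hη)
  simp_rw [hind, integral_indicator hs] at this
  exact this

theorem OrthonormalBasis.tendsto_of_forall_tendsto_inner {ι F β : Type*} [Fintype ι]
    [NormedAddCommGroup F] [InnerProductSpace ℝ F] (b : OrthonormalBasis ι ℝ F) {l : Filter β}
    {s : β → F} {x : F} (h : ∀ i, Tendsto (fun k => ⟪b i, s k⟫) l (𝓝 ⟪b i, x⟫)) :
    Tendsto s l (𝓝 x) := by
  rw [← b.sum_repr' x, show s = fun k => ∑ i, ⟪b i, s k⟫ • b i from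
    funext fun k => (b.sum_repr' (s k)).symm]
  exact tendsto_finsetSum _ fun i _ => (h i).smul_const (b i)

end WeakL2

section OperatorValued

variable {α V F : Type*} [MeasurableSpace α] {μ : Measure α} [NormedAddCommGroup V]
  [NormedAddCommGroup F]

theorem MeasureTheory.AEStronglyMeasurable.clm_apply [NormedSpace ℝ V] [NormedSpace ℝ F]
    {Φ : α → V →L[ℝ] F} {u : α → V}
    (hΦ : AEStronglyMeasurable Φ μ) (hu : AEStronglyMeasurable u μ) :
    AEStronglyMeasurable (fun a => Φ a (u a)) μ :=
  isBoundedBilinearMap_apply.continuous.comp_aestronglyMeasurable₂ hΦ hu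

theorem MeasureTheory.Integrable.clm_apply_of_norm_le [NormedSpace ℝ V] [NormedSpace ℝ F]
    {Φ : α → V →L[ℝ] F} {u : α → V} {M : ℝ}
    (hΦ : AEStronglyMeasurable Φ μ) (hΦM : ∀ a, ‖Φ a‖ ≤ M) (hu : Integrable u μ) :
    Integrable (fun a => Φ a (u a)) μ :=
  (hu.norm.const_mul M).mono' (hΦ.clm_apply hu.1) (.of_forall fun a =>
    (Φ a).le_of_opNorm_le (hΦM a) (u a))

theorem TendstoWeaklyL2.tendsto_integral_clm_apply [InnerProductSpace ℝ V] [CompleteSpace V]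
    [InnerProductSpace ℝ F] [FiniteDimensional ℝ F] [IsFiniteMeasure μ]
    {u : ℕ → α → V} {v : α → V} (h : TendstoWeaklyL2 μ u v)
    (hu : ∀ k, Integrable (u k) μ) (hv : Integrable v μ)
    {Φ : α → V →L[ℝ] F} (hΦ : AEStronglyMeasurable Φ μ) {M : ℝ} (hΦM : ∀ a, ‖Φ a‖ ≤ M) :
    Tendsto (fun k => ∫ a, Φ a (u k a) ∂μ) atTop (𝓝 (∫ a, Φ a (v a) ∂μ)) := by
  set b := stdOrthonormalBasis ℝ F
  have hcoord : ∀ w : α → V, Integrable w μ → ∀ i,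
      ⟪b i, ∫ a, Φ a (w a) ∂μ⟫ = ∫ a, ⟪w a, ContinuousLinearMap.adjoint (Φ a) (b i)⟫ ∂μ :=
    fun w hw i => by
      rw [← integral_inner (hw.clm_apply_of_norm_le hΦ hΦM)]
      simp_rw [ContinuousLinearMap.adjoint_inner_right, real_inner_comm]
  have hη : ∀ i, MemLp (fun a => ContinuousLinearMap.adjoint (Φ a) (b i)) 2 μ := fun i =>
    .of_bound ((ContinuousLinearMap.adjoint.continuous.comp_aestronglyMeasurable
      hΦ).apply_continuousLinearMap _) M (.of_forall fun a => by
        calc _ ≤ ‖ContinuousLinearMap.adjoint (Φ a)‖ * ‖b i‖ := ContinuousLinearMap.le_opNorm _ _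
          _ ≤ M := by rw [LinearIsometryEquiv.norm_map, b.orthonormal.1 i, mul_one]; exact hΦM a)
  refine b.tendsto_of_forall_tendsto_inner fun i => ?_
  simp_rw [hcoord _ (hu _), hcoord v hv]
  exact h _ (hη i)

end OperatorValued

theorem MeasureTheory.IntegrableOn.intervalIntegrable_of_mem_Icc {E : Type*}
    [NormedAddCommGroup E] {f : ℝ → E} {a b t : ℝ} (hf : IntegrableOn f (Icc a b))
    (ht : t ∈ Icc a b) : IntervalIntegrable f volume t b :=
  (hf.mono_set (by rw [uIcc_of_le ht.2]; exact Icc_subset_Icc_left ht.1)).intervalIntegrable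

instance : IsProbabilityMeasure (volume.restrict (Icc (0 : ℝ) 1)) :=
  ⟨by simp⟩

theorem intervalIntegral_norm_le_norm_toLp {V : Type*} [NormedAddCommGroup V] {w : ℝ → V}
    (hw : MemLp w 2 (volume.restrict (Icc 0 1))) : ∫ r in 0..1, ‖w r‖ ≤ ‖hw.toLp w‖ := by
  rw [intervalIntegral.integral_of_le zero_le_one, ← integral_Icc_eq_integral_Ioc]
  exact integral_norm_le_norm_toLp hw

section Admissible

variable {V F : Type*} [NormedAddCommGroup V] [NormedSpace ℝ V] [NormedAddCommGroup F]
  [NormedSpace ℝ F]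

structure IsAdmissible_s6 (j : V →ₗ[ℝ] (F → F)) (C : ℝ) : Prop where
  nonneg : 0 ≤ C
  norm_apply_le : ∀ v x, ‖j v x‖ ≤ C * ‖v‖
  norm_apply_sub_le : ∀ v x y, ‖j v x - j v y‖ ≤ C * ‖v‖ * ‖x - y‖

structure IsTrajectory (j : V →ₗ[ℝ] (F → F)) (ν : ℝ → V) (s : ℝ) (x : F) (f : ℝ → F) :
    Prop where
  continuousOn : ContinuousOn f (Icc 0 1)
  eq_add_integral : ∀ t ∈ Icc (0 : ℝ) 1, f t = x + ∫ r in s..t, j (ν r) (f r)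

namespace IsAdmissible_s6

variable {j : V →ₗ[ℝ] (F → F)} {C : ℝ}

noncomputable def evalCLM (hj : IsAdmissible_s6 j C) (y : F) : V →L[ℝ] F :=
  ((LinearMap.proj y).comp j).mkContinuous C fun v => hj.norm_apply_le v y

theorem norm_evalCLM_le (hj : IsAdmissible_s6 j C) (y : F) : ‖hj.evalCLM y‖ ≤ C :=
  LinearMap.mkContinuous_norm_le _ hj.nonneg _

theorem lipschitzWith_evalCLM (hj : IsAdmissible_s6 j C) :
    LipschitzWith C.toNNReal hj.evalCLM := by
  refine LipschitzWith.of_dist_le_mul fun y y' => ?_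
  rw [dist_eq_norm, dist_eq_norm, Real.coe_toNNReal C hj.nonneg]
  refine ContinuousLinearMap.opNorm_le_bound _ (by have := hj.nonneg; positivity) fun v => ?_
  calc ‖(hj.evalCLM y - hj.evalCLM y') v‖ = ‖j v y - j v y'‖ := rfl
    _ ≤ C * ‖y - y'‖ * ‖v‖ := (hj.norm_apply_sub_le v y y').trans_eq (by ring)

theorem aestronglyMeasurable_evalCLM (hj : IsAdmissible_s6 j C) {f : ℝ → F} {s : Set ℝ}
    (hf : ContinuousOn f s) (hs : MeasurableSet s) :
    AEStronglyMeasurable (fun r => hj.evalCLM (f r)) (volume.restrict s) :=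
  (hj.lipschitzWith_evalCLM.continuous.comp_continuousOn hf).aestronglyMeasurable hs

theorem integrableOn_apply (hj : IsAdmissible_s6 j C) {ν : ℝ → V} {f : ℝ → F}
    (hν : IntegrableOn ν (Icc 0 1)) (hf : ContinuousOn f (Icc 0 1)) :
    IntegrableOn (fun r => j (ν r) (f r)) (Icc 0 1) :=
  hν.clm_apply_of_norm_le (hj.aestronglyMeasurable_evalCLM hf measurableSet_Icc)
    fun r => hj.norm_evalCLM_le (f r)

theorem continuousOn_integral_apply (hj : IsAdmissible_s6 j C) {ν : ℝ → V} {f : ℝ → F}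
    (hν : IntegrableOn ν (Icc 0 1)) (hf : ContinuousOn f (Icc 0 1)) :
    ContinuousOn (fun s => ∫ r in s..1, j (ν r) (f r)) (Icc 0 1) := by
  have := intervalIntegral.continuousOn_primitive_interval_left
    ((hj.integrableOn_apply hν hf).mono_set (uIcc_of_le zero_le_one).subset)
  rwa [uIcc_of_le zero_le_one] at this

theorem norm_integral_apply_le (hj : IsAdmissible_s6 j C) {ν : ℝ → V} {f : ℝ → F}
    (hν : MemLp ν 2 (volume.restrict (Icc 0 1))) (hf : ContinuousOn f (Icc 0 1)) {s : ℝ}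
    (hs : s ∈ Icc (0 : ℝ) 1) : ‖∫ r in s..1, j (ν r) (f r)‖ ≤ C * ‖hν.toLp ν‖ := by
  have hνi : IntegrableOn ν (Icc 0 1) := hν.integrable one_le_two
  have hk : IntegrableOn (fun r => C * ‖ν r‖) (Icc 0 1) := hνi.norm.const_mul C
  calc ‖∫ r in s..1, j (ν r) (f r)‖ ≤ ∫ r in s..1, ‖j (ν r) (f r)‖ :=
        intervalIntegral.norm_integral_le_integral_norm hs.2
    _ ≤ ∫ r in s..1, C * ‖ν r‖ :=
        intervalIntegral.integral_mono_on hs.2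
          (IntegrableOn.intervalIntegrable_of_mem_Icc (hj.integrableOn_apply hνi hf).norm hs)
          (hk.intervalIntegrable_of_mem_Icc hs)
          fun r _ => hj.norm_apply_le _ _
    _ ≤ ∫ r in 0..1, C * ‖ν r‖ :=
        intervalIntegral.integral_mono_interval hs.1 hs.2 le_rfl
          (.of_forall fun r => mul_nonneg hj.nonneg (norm_nonneg _))
          (hk.intervalIntegrable_of_mem_Icc (left_mem_Icc.2 zero_le_one))
    _ ≤ C * ‖hν.toLp ν‖ := by
        rw [intervalIntegral.integral_const_mul]
        exact mul_le_mul_of_nonneg_left (intervalIntegral_norm_le_norm_toLp hν) hj.nonneg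

theorem norm_sub_le_of_isTrajectory (hj : IsAdmissible_s6 j C) {ν μ : ℝ → V} {x y : F}
    {f g : ℝ → F} (hν : IntegrableOn ν (Icc 0 1)) (hμ : IntegrableOn μ (Icc 0 1))
    (hf : IsTrajectory j ν 1 x f) (hg : IsTrajectory j μ 1 y g) :
    ‖g 0 - f 0‖ ≤ ‖y - x + ∫ r in 0..1, j (ν r - μ r) (f r)‖ +
      Real.exp (∫ r in 0..1, C * ‖μ r‖) *
        ∫ r in 0..1, C * ‖μ r‖ * ‖y - x + ∫ r' in r..1, j (ν r' - μ r') (f r')‖ := by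
  have h0 : (0 : ℝ) ∈ Icc (0 : ℝ) 1 := left_mem_Icc.2 zero_le_one
  have hνf := hj.integrableOn_apply hν hf.continuousOn
  have hμf := hj.integrableOn_apply hμ hf.continuousOn
  have hμg := hj.integrableOn_apply hμ hg.continuousOn
  have hk : IntegrableOn (fun r => C * ‖μ r‖) (Icc 0 1) := hμ.norm.const_mul C
  have hkgf := hk.mul_continuousOn (hg.continuousOn.sub hf.continuousOn).norm isCompact_Icc
  have he : ContinuousOn (fun s => ‖y - x + ∫ r in s..1, j (ν r - μ r) (f r)‖) (Icc 0 1) :=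
    (continuousOn_const.add (hj.continuousOn_integral_apply (hν.sub hμ) hf.continuousOn)).norm
  have hke := hk.mul_continuousOn he isCompact_Icc
  refine le_add_exp_mul_integral_of_le_add_integral zero_le_one
    (hk.intervalIntegrable_of_mem_Icc h0) (fun r _ => mul_nonneg hj.nonneg (norm_nonneg _))
    (fun r _ => norm_nonneg _) (hkgf.intervalIntegrable_of_mem_Icc h0)
    (hke.intervalIntegrable_of_mem_Icc h0) fun s hs => ?_
  have hsplit : g s - f s = (y - x + ∫ r in s..1, j (ν r - μ r) (f r)) +
      ∫ r in s..1, (j (μ r) (f r) - j (μ r) (g r)) := by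
    rw [hf.eq_add_integral s hs, hg.eq_add_integral s hs, intervalIntegral.integral_symm s 1,
      intervalIntegral.integral_symm s 1]
    simp_rw [map_sub, Pi.sub_apply]
    rw [intervalIntegral.integral_sub (hνf.intervalIntegrable_of_mem_Icc hs)
        (hμf.intervalIntegrable_of_mem_Icc hs),
      intervalIntegral.integral_sub (hμf.intervalIntegrable_of_mem_Icc hs)
        (hμg.intervalIntegrable_of_mem_Icc hs)]
    abel
  calc ‖g s - f s‖ ≤ ‖y - x + ∫ r in s..1, j (ν r - μ r) (f r)‖ +
        ‖∫ r in s..1, (j (μ r) (f r) - j (μ r) (g r))‖ := hsplit ▸ norm_add_le _ _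
    _ ≤ ‖y - x + ∫ r in s..1, j (ν r - μ r) (f r)‖ +
        ∫ r in s..1, C * ‖μ r‖ * ‖g r - f r‖ := by
      gcongr
      refine (intervalIntegral.norm_integral_le_integral_norm hs.2).trans
        (intervalIntegral.integral_mono_on hs.2
          (IntegrableOn.intervalIntegrable_of_mem_Icc (hμf.sub hμg).norm hs)
          (hkgf.intervalIntegrable_of_mem_Icc hs) fun r _ => ?_)
      rw [norm_sub_rev (g r)]
      exact hj.norm_apply_sub_le _ _ _

theorem continuous_of_isTrajectory (hj : IsAdmissible_s6 j C) {ν : ℝ → V}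
    (hν : IntegrableOn ν (Icc 0 1)) {ψ : F → ℝ → F} (hψ : ∀ x, IsTrajectory j ν 1 x (ψ x)) :
    Continuous fun x => ψ x 0 := by
  set K := ∫ r in 0..1, C * ‖ν r‖
  have hK : 0 ≤ K := intervalIntegral.integral_nonneg zero_le_one fun r _ =>
    mul_nonneg hj.nonneg (norm_nonneg _)
  refine (LipschitzWith.of_dist_le_mul (K := (1 + Real.exp K * K).toNNReal)
    fun y x => ?_).continuous
  have := hj.norm_sub_le_of_isTrajectory hν hν (hψ x) (hψ y)
  simp only [sub_self, map_zero, Pi.zero_apply, intervalIntegral.integral_zero, add_zero,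
    intervalIntegral.integral_mul_const] at this
  rw [dist_eq_norm, dist_eq_norm, Real.coe_toNNReal _ (by positivity)]
  linarith

theorem norm_sub_le_of_isTrajectory_of_memLp (hj : IsAdmissible_s6 j C) {ν μ : ℝ → V} {x : F}
    {f g : ℝ → F} (hν : MemLp ν 2 (volume.restrict (Icc 0 1)))
    (hμ : MemLp μ 2 (volume.restrict (Icc 0 1)))
    (hf : IsTrajectory j ν 1 x f) (hg : IsTrajectory j μ 1 x g)
    (he : MemLp (fun s => ‖∫ r in s..1, j (ν r - μ r) (f r)‖) 2 (volume.restrict (Icc 0 1))) :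
    ‖g 0 - f 0‖ ≤ ‖∫ r in 0..1, j (ν r - μ r) (f r)‖ +
      Real.exp (C * ‖hμ.toLp μ‖) * (C * (‖hμ.toLp μ‖ * ‖he.toLp _‖)) := by
  have := hj.norm_sub_le_of_isTrajectory (hν.integrable one_le_two) (hμ.integrable one_le_two)
    hf hg
  simp only [sub_self, zero_add, mul_assoc, intervalIntegral.integral_const_mul] at this
  refine this.trans (add_le_add le_rfl (mul_le_mul ?_ ?_ ?_ (Real.exp_pos _).le))
  · exact Real.exp_le_exp.2
      (mul_le_mul_of_nonneg_left (intervalIntegral_norm_le_norm_toLp hμ) hj.nonneg)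
  · refine mul_le_mul_of_nonneg_left ?_ hj.nonneg
    rw [intervalIntegral.integral_of_le zero_le_one, ← integral_Icc_eq_integral_Ioc]
    exact integral_norm_mul_le_norm_toLp_mul hμ he
  · exact mul_nonneg hj.nonneg (intervalIntegral.integral_nonneg zero_le_one fun r _ =>
      mul_nonneg (norm_nonneg _) (norm_nonneg _))

end IsAdmissible_s6

end Admissible

section WeakConvergence

variable {V F : Type*} [NormedAddCommGroup V] [InnerProductSpace ℝ V] [CompleteSpace V]
  [NormedAddCommGroup F] [InnerProductSpace ℝ F] [FiniteDimensional ℝ F]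

namespace IsAdmissible_s6

variable {j : V →ₗ[ℝ] (F → F)} {C : ℝ}

theorem tendsto_integral_apply_sub (hj : IsAdmissible_s6 j C) {ν : ℝ → V} {νk : ℕ → ℝ → V}
    (hν : MemLp ν 2 (volume.restrict (Icc 0 1)))
    (hνk : ∀ k, MemLp (νk k) 2 (volume.restrict (Icc 0 1)))
    (h : TendstoWeaklyL2 (volume.restrict (Icc 0 1)) νk ν) {f : ℝ → F}
    (hf : ContinuousOn f (Icc 0 1)) {s : ℝ} (hs : s ∈ Icc (0 : ℝ) 1) :
    Tendsto (fun k => ∫ r in s..1, j (ν r - νk k r) (f r)) atTop (𝓝 0) := by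
  have hsub : Ioc s 1 ⊆ Icc 0 1 := Ioc_subset_Icc_self.trans (Icc_subset_Icc_left hs.1)
  have hint : ∀ {w : ℝ → V}, MemLp w 2 (volume.restrict (Icc 0 1)) → IntegrableOn w (Ioc s 1) :=
    fun hw => IntegrableOn.mono_set (hw.integrable one_le_two) hsub
  have hs' : TendstoWeaklyL2 (volume.restrict (Ioc s 1)) νk ν := by
    have := h.restrict (measurableSet_Ioc (a := s) (b := 1))
    rwa [Measure.restrict_restrict measurableSet_Ioc, inter_eq_left.2 hsub] at this
  have hΦ := hj.aestronglyMeasurable_evalCLM (hf.mono hsub) measurableSet_Ioc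
  have hΦM : ∀ r, ‖hj.evalCLM (f r)‖ ≤ C := fun r => hj.norm_evalCLM_le (f r)
  have hlim := hs'.tendsto_integral_clm_apply (fun k => hint (hνk k)) (hint hν) hΦ hΦM
  have hsplit : ∀ k, ∫ r in s..1, j (ν r - νk k r) (f r) =
      (∫ r in Ioc s 1, hj.evalCLM (f r) (ν r)) - ∫ r in Ioc s 1, hj.evalCLM (f r) (νk k r) :=
    fun k => by
      rw [intervalIntegral.integral_of_le hs.2, ← integral_sub
        ((hint hν).clm_apply_of_norm_le hΦ hΦM) ((hint (hνk k)).clm_apply_of_norm_le hΦ hΦM)]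
      simp_rw [map_sub]
      rfl
  simp_rw [hsplit]
  simpa using (tendsto_const_nhds (x := ∫ r in Ioc s 1, hj.evalCLM (f r) (ν r))).sub hlim

theorem tendsto_of_isTrajectory (hj : IsAdmissible_s6 j C) {ν : ℝ → V} {νk : ℕ → ℝ → V}
    (hν : MemLp ν 2 (volume.restrict (Icc 0 1)))
    (hνk : ∀ k, MemLp (νk k) 2 (volume.restrict (Icc 0 1)))
    (h : TendstoWeaklyL2 (volume.restrict (Icc 0 1)) νk ν) {x : F} {f : ℝ → F}
    {fk : ℕ → ℝ → F} (hf : IsTrajectory j ν 1 x f)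
    (hfk : ∀ k, IsTrajectory j (νk k) 1 x (fk k)) :
    Tendsto (fun k => fk k 0) atTop (𝓝 (f 0)) := by
  obtain ⟨B, hB⟩ := h.exists_norm_toLp_le hνk
  set e : ℕ → ℝ → ℝ := fun k s => ‖∫ r in s..1, j (ν r - νk k r) (f r)‖
  have he_le : ∀ k, ∀ᵐ s ∂volume.restrict (Icc 0 1), ‖e k s‖ ≤ C * (‖hν.toLp ν‖ + B) :=
    fun k => (ae_restrict_iff' measurableSet_Icc).2 (.of_forall fun s hs => by
      have := hj.norm_integral_apply_le (hν.sub (hνk k)) hf.continuousOn hs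
      rw [MemLp.toLp_sub hν (hνk k)] at this
      rw [norm_norm]
      exact this.trans (mul_le_mul_of_nonneg_left
        ((norm_sub_le _ _).trans (add_le_add le_rfl (hB k))) hj.nonneg))
  have he : ∀ k, MemLp (e k) 2 (volume.restrict (Icc 0 1)) := fun k =>
    .of_bound (((hj.continuousOn_integral_apply ((hν.sub (hνk k)).integrable one_le_two)
      hf.continuousOn).norm).aestronglyMeasurable measurableSet_Icc) _ (he_le k)
  have he_lim : ∀ s ∈ Icc (0 : ℝ) 1, Tendsto (fun k => e k s) atTop (𝓝 0) := fun s hs => by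
    simpa only [norm_zero] using (hj.tendsto_integral_apply_sub hν hνk h hf.continuousOn hs).norm
  have hL2 : Tendsto (fun k => ‖(he k).toLp (e k)‖) atTop (𝓝 0) :=
    tendsto_norm_toLp_of_dominated he he_le
      ((ae_restrict_iff' measurableSet_Icc).2 (.of_forall he_lim))
  have hest : ∀ k, ‖fk k 0 - f 0‖ ≤
      e k 0 + Real.exp (C * B) * (C * (B * ‖(he k).toLp (e k)‖)) := fun k => by
    have := hj.nonneg
    refine (hj.norm_sub_le_of_isTrajectory_of_memLp hν (hνk k) hf (hfk k) (he k)).trans ?_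
    gcongr <;> exact hB k
  rw [tendsto_iff_norm_sub_tendsto_zero]
  refine squeeze_zero (fun k => norm_nonneg _) hest ?_
  simpa using (he_lim 0 (left_mem_Icc.2 zero_le_one)).add
    (((hL2.const_mul B).const_mul C).const_mul (Real.exp (C * B)))

end IsAdmissible_s6

end WeakConvergence

theorem tendsto_integral_sq_sub_comp {X Y : Type*} [TopologicalSpace X] [MeasurableSpace X]
    [OpensMeasurableSpace X] [TopologicalSpace Y] {μ : Measure X} [IsFiniteMeasure μ]
    {I : Y → ℝ} (hI : Continuous I) {M : ℝ} (hIM : ∀ y, |I y| ≤ M) {G : ℕ → X → Y}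
    {g : X → Y} (hG : ∀ k, Continuous (G k)) (hg : Continuous g)
    (hlim : ∀ x, Tendsto (fun k => G k x) atTop (𝓝 (g x))) :
    Tendsto (fun k => ∫ x, |I (G k x) - I (g x)| ^ 2 ∂μ) atTop (𝓝 0) := by
  have hbound : ∀ y z, |I y - I z| ^ 2 ≤ (2 * M) ^ 2 := fun y z =>
    pow_le_pow_left₀ (abs_nonneg _)
      ((abs_sub _ _).trans (by linarith [hIM y, hIM z])) 2
  simpa only [integral_zero] using tendsto_integral_of_dominated_convergence
    (μ := μ) (f := fun _ => 0) (F := fun k x => |I (G k x) - I (g x)| ^ 2) (fun _ => (2 * M) ^ 2)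
    (fun k => (((hI.comp (hG k)).sub (hI.comp hg)).abs.pow 2).aestronglyMeasurable)
    (integrable_const _)
    (fun k => .of_forall fun x => by
      rw [Real.norm_of_nonneg (pow_nonneg (abs_nonneg _) 2)]
      exact hbound _ _)
    (.of_forall fun x => by
      simpa using ((((hI.tendsto (g x)).comp (hlim x)).sub_const (I (g x))).abs.pow 2))

theorem deformed_templates_L2_convergence_of_weak_convergence_general
    (n : ℕ)
    (V : Type) [NormedAddCommGroup V] [InnerProductSpace ℝ V] [CompleteSpace V]
    (j : V →ₗ[ℝ] (EuclideanSpace ℝ (Fin n) → EuclideanSpace ℝ (Fin n)))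
    (C : ℝ) (hC : 0 ≤ C)
    (hjbd : ∀ (v : V) (x : EuclideanSpace ℝ (Fin n)), ‖j v x‖ ≤ C * ‖v‖)
    (hjlip : ∀ (v : V) (x y : EuclideanSpace ℝ (Fin n)),
      ‖j v x - j v y‖ ≤ C * ‖v‖ * ‖x - y‖)
    (Ω : Set (EuclideanSpace ℝ (Fin n)))
    (hΩbdd : Bornology.IsBounded Ω)
    (I : EuclideanSpace ℝ (Fin n) → ℝ) (hIcont : Continuous I)
    (M : ℝ) (hIbdd : ∀ x, |I x| ≤ M)
    (ν : ℝ → V) (νseq : ℕ → ℝ → V)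
    (hν : MemLp ν 2 (volume.restrict (Icc (0:ℝ) 1)))
    (hνseq : ∀ k, MemLp (νseq k) 2 (volume.restrict (Icc (0:ℝ) 1)))
    (hweak : ∀ η : ℝ → V, MemLp η 2 (volume.restrict (Icc (0:ℝ) 1)) →
      Tendsto (fun k => ∫ t in Icc (0:ℝ) 1, ⟪νseq k t, η t⟫) atTop
        (nhds (∫ t in Icc (0:ℝ) 1, ⟪ν t, η t⟫)))
    (φ : ℝ → ℝ → EuclideanSpace ℝ (Fin n) → EuclideanSpace ℝ (Fin n))
    (φseq : ℕ → ℝ → ℝ → EuclideanSpace ℝ (Fin n) → EuclideanSpace ℝ (Fin n))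
    (hφcont : ∀ s ∈ Icc (0:ℝ) 1, ∀ x, ContinuousOn (fun t => φ s t x) (Icc (0:ℝ) 1))
    (hφ : ∀ s ∈ Icc (0:ℝ) 1, ∀ x, ∀ t ∈ Icc (0:ℝ) 1,
      φ s t x = x + ∫ r in s..t, j (ν r) (φ s r x))
    (hφseqcont : ∀ k, ∀ s ∈ Icc (0:ℝ) 1, ∀ x,
      ContinuousOn (fun t => φseq k s t x) (Icc (0:ℝ) 1))
    (hφseq : ∀ k, ∀ s ∈ Icc (0:ℝ) 1, ∀ x, ∀ t ∈ Icc (0:ℝ) 1,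
      φseq k s t x = x + ∫ r in s..t, j (νseq k r) (φseq k s r x)) :
    Tendsto (fun k => ∫ x in Ω, |I (φseq k 1 0 x) - I (φ 1 0 x)| ^ 2) atTop (nhds 0) := by
  have hj : IsAdmissible_s6 j C := ⟨hC, hjbd, hjlip⟩
  have h1 : (1 : ℝ) ∈ Icc (0 : ℝ) 1 := right_mem_Icc.2 zero_le_one
  have htraj : ∀ x, IsTrajectory j ν 1 x (fun t => φ 1 t x) := fun x =>
    ⟨hφcont 1 h1 x, hφ 1 h1 x⟩
  have htrajseq : ∀ k x, IsTrajectory j (νseq k) 1 x (fun t => φseq k 1 t x) := fun k x =>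
    ⟨hφseqcont k 1 h1 x, hφseq k 1 h1 x⟩
  have : IsFiniteMeasure (volume.restrict Ω) :=
    isFiniteMeasure_restrict.2 hΩbdd.measure_lt_top.ne
  exact tendsto_integral_sq_sub_comp hIcont hIbdd
    (fun k => hj.continuous_of_isTrajectory ((hνseq k).integrable one_le_two) (htrajseq k))
    (hj.continuous_of_isTrajectory (hν.integrable one_le_two) htraj)
    fun x => hj.tendsto_of_isTrajectory hν hνseq hweak (htraj x) fun k => htrajseq k x

/-- **Convergence of deformed templates (geometric group action).**
`(V, j, C)` is an admissible Hilbert space of vector fields, `Ω ⊆ ℝⁿ` is bounded and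
measurable, and `I : ℝⁿ → ℝ` is a bounded continuous template.  For
`ν ∈ L²([0,1]; V)` with two-parameter flow `φ_ν`, the deformed template is
`W(ν)(x) = I (φ_ν 1 0 x)` (geometric group action).  If `ν_k ⇀ ν` weakly in
`L²([0,1]; V)`, then `∫_Ω |W(ν_k)(x) − W(ν)(x)|² dx → 0`. -/
theorem deformed_templates_L2_convergence_of_weak_convergence
    (n : ℕ)
    (V : Type) [NormedAddCommGroup V] [InnerProductSpace ℝ V] [CompleteSpace V]
    [TopologicalSpace.SeparableSpace V]
    (j : V →ₗ[ℝ] (EuclideanSpace ℝ (Fin n) → EuclideanSpace ℝ (Fin n)))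
    (C : ℝ) (hC : 0 ≤ C)
    (hjbd : ∀ (v : V) (x : EuclideanSpace ℝ (Fin n)), ‖j v x‖ ≤ C * ‖v‖)
    (hjlip : ∀ (v : V) (x y : EuclideanSpace ℝ (Fin n)),
      ‖j v x - j v y‖ ≤ C * ‖v‖ * ‖x - y‖)
    (Ω : Set (EuclideanSpace ℝ (Fin n)))
    (hΩbdd : Bornology.IsBounded Ω) (hΩmeas : MeasurableSet Ω)
    (I : EuclideanSpace ℝ (Fin n) → ℝ) (hIcont : Continuous I)
    (M : ℝ) (hIbdd : ∀ x, |I x| ≤ M)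
    (ν : ℝ → V) (νseq : ℕ → ℝ → V)
    (hν : MemLp ν 2 (volume.restrict (Icc (0:ℝ) 1)))
    (hνseq : ∀ k, MemLp (νseq k) 2 (volume.restrict (Icc (0:ℝ) 1)))
    (hweak : ∀ η : ℝ → V, MemLp η 2 (volume.restrict (Icc (0:ℝ) 1)) →
      Tendsto (fun k => ∫ t in Icc (0:ℝ) 1, ⟪νseq k t, η t⟫) atTop
        (nhds (∫ t in Icc (0:ℝ) 1, ⟪ν t, η t⟫)))
    (φ : ℝ → ℝ → EuclideanSpace ℝ (Fin n) → EuclideanSpace ℝ (Fin n))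
    (φseq : ℕ → ℝ → ℝ → EuclideanSpace ℝ (Fin n) → EuclideanSpace ℝ (Fin n))
    (hφcont : ∀ s ∈ Icc (0:ℝ) 1, ∀ x, ContinuousOn (fun t => φ s t x) (Icc (0:ℝ) 1))
    (hφ : ∀ s ∈ Icc (0:ℝ) 1, ∀ x, ∀ t ∈ Icc (0:ℝ) 1,
      φ s t x = x + ∫ r in s..t, j (ν r) (φ s r x))
    (hφseqcont : ∀ k, ∀ s ∈ Icc (0:ℝ) 1, ∀ x,
      ContinuousOn (fun t => φseq k s t x) (Icc (0:ℝ) 1))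
    (hφseq : ∀ k, ∀ s ∈ Icc (0:ℝ) 1, ∀ x, ∀ t ∈ Icc (0:ℝ) 1,
      φseq k s t x = x + ∫ r in s..t, j (νseq k r) (φseq k s r x)) :
    Tendsto (fun k => ∫ x in Ω, |I (φseq k 1 0 x) - I (φ 1 0 x)| ^ 2) atTop (nhds 0) :=
  deformed_templates_L2_convergence_of_weak_convergence_general n V j C hC hjbd hjlip Ω hΩbdd I
    hIcont M hIbdd ν νseq hν hνseq hweak φ φseq hφcont hφ hφseqcont hφseq
end

section
/- Let Ω ⊂ ℝⁿ be a bounded measurable set and I : ℝⁿ → ℝ a bounded continuous function. Let ψ, ψ_k : Ω → ℝⁿ (k ∈ ℕ) be continuously differentiable maps such that: (i) ψ_k → ψ uniformly on Ω; (ii) the Jacobian determinants det Dψ_k converge uniformly on Ω to det Dψ; and (iii) there is a constant M with |det Dψ_k(x)| ≤ M for all k and x ∈ Ω. Then the mass-preserving deformed templates converge in L²(Ω, ℝ): ∫_Ω | |det Dψ_k(x)| I(ψ_k(x)) − |det Dψ(x)| I(ψ(x)) |² dx → 0 as k → ∞. -/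
open MeasureTheory Set Filter Topology

/-! Each deformed template `|det Dψ_k| I∘ψ_k` is measurable and bounded by `M * MI` on `Ω`, and
uniform convergence of `ψ_k` and of `det Dψ_k` gives pointwise convergence of the templates on `Ω`
(so the limit is measurable as well). Since `Ω` has finite measure, the constant bound is
integrable and dominated convergence applies. -/

noncomputable def massPreservingAction {E : Type*} [NormedAddCommGroup E] [NormedSpace ℝ E]
    (ψ : E → E) (I : E → ℝ) (x : E) : ℝ :=
  |(fderiv ℝ ψ x).det| * I (ψ x)

section MassPreservingAction

variable {E : Type*} [NormedAddCommGroup E] [NormedSpace ℝ E] {ψ : E → E} {I : E → ℝ}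

theorem measurable_massPreservingAction [CompleteSpace E] [MeasurableSpace E] [BorelSpace E]
    (hψ : Measurable ψ) (hI : Measurable I) : Measurable (massPreservingAction ψ I) :=
  (ContinuousLinearMap.continuous_det.measurable.comp (measurable_fderiv ℝ ψ)).abs.mul
    (hI.comp hψ)

theorem abs_massPreservingAction_le {x : E} {M MI : ℝ} (hdet : |(fderiv ℝ ψ x).det| ≤ M)
    (hI : ∀ y, |I y| ≤ MI) : |massPreservingAction ψ I x| ≤ M * MI := by
  rw [massPreservingAction, abs_mul, abs_abs]
  exact mul_le_mul hdet (hI _) (abs_nonneg _) ((abs_nonneg _).trans hdet)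

end MassPreservingAction

theorem tendsto_setIntegral_abs_sub_pow_of_bounded {α ι : Type*} [MeasurableSpace α]
    {μ : Measure α} {s : Set α} (hs : MeasurableSet s) (hμs : μ s ≠ ⊤)
    {l : Filter ι} [l.IsCountablyGenerated] [l.NeBot] {F : ι → α → ℝ} {f : α → ℝ} {C : ℝ}
    {p : ℕ} (hp : p ≠ 0) (hF : ∀ i, AEStronglyMeasurable (F i) (μ.restrict s))
    (hFC : ∀ i, ∀ x ∈ s, |F i x| ≤ C) (hlim : ∀ x ∈ s, Tendsto (fun i => F i x) l (𝓝 (f x))) :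
    Tendsto (fun i => ∫ x in s, |F i x - f x| ^ p ∂μ) l (𝓝 0) := by
  have : IsFiniteMeasure (μ.restrict s) := isFiniteMeasure_restrict.2 hμs
  have hf : AEStronglyMeasurable f (μ.restrict s) :=
    aestronglyMeasurable_of_tendsto_ae l hF (ae_restrict_of_forall_mem hs hlim)
  have hfC : ∀ x ∈ s, |f x| ≤ C := fun x hx =>
    le_of_tendsto (hlim x hx).abs (Eventually.of_forall fun i => hFC i x hx)
  have hbound : ∀ i, ∀ x ∈ s, ‖|F i x - f x| ^ p‖ ≤ (C + C) ^ p := fun i x hx => by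
    rw [Real.norm_eq_abs, abs_pow, abs_abs]
    exact pow_le_pow_left₀ (abs_nonneg _)
      ((abs_sub _ _).trans (add_le_add (hFC i x hx) (hfC x hx))) p
  have hlim_pow : ∀ x ∈ s, Tendsto (fun i => |F i x - f x| ^ p) l (𝓝 0) := fun x hx => by
    simpa [zero_pow hp] using (((hlim x hx).sub_const (f x)).abs.pow p)
  simpa using tendsto_integral_filter_of_dominated_convergence (μ := μ.restrict s)
    (fun _ => (C + C) ^ p)
    (Eventually.of_forall fun i => (continuous_abs.comp_aestronglyMeasurable ((hF i).sub hf)).pow p)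
    (Eventually.of_forall fun i => ae_restrict_of_forall_mem hs (hbound i))
    (integrable_const _) (ae_restrict_of_forall_mem hs hlim_pow)

theorem massPreserving_deformed_templates_L2_convergence_general
    (n : ℕ) (Ω : Set (EuclideanSpace ℝ (Fin n)))
    (hΩbdd : Bornology.IsBounded Ω) (hΩmeas : MeasurableSet Ω)
    (I : EuclideanSpace ℝ (Fin n) → ℝ) (hIcont : Continuous I)
    (MI : ℝ) (hIbdd : ∀ x, |I x| ≤ MI)
    (ψ : EuclideanSpace ℝ (Fin n) → EuclideanSpace ℝ (Fin n))
    (ψseq : ℕ → EuclideanSpace ℝ (Fin n) → EuclideanSpace ℝ (Fin n))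
    (hψseq : ∀ k, ContDiff ℝ 1 (ψseq k))
    (hunif : TendstoUniformlyOn (fun k x => ψseq k x) ψ atTop Ω)
    (hdetunif : TendstoUniformlyOn (fun k x => (fderiv ℝ (ψseq k) x).det)
      (fun x => (fderiv ℝ ψ x).det) atTop Ω)
    (M : ℝ) (hdetbdd : ∀ k, ∀ x ∈ Ω, |(fderiv ℝ (ψseq k) x).det| ≤ M) :
    Tendsto (fun k => ∫ x in Ω,
        |((|(fderiv ℝ (ψseq k) x).det| * I (ψseq k x))
          - (|(fderiv ℝ ψ x).det| * I (ψ x)))| ^ 2)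
      atTop (nhds 0) := by
  have hlim : ∀ x ∈ Ω, Tendsto (fun k => massPreservingAction (ψseq k) I x) atTop
      (𝓝 (massPreservingAction ψ I x)) := fun x hx =>
    (hdetunif.tendsto_at hx).abs.mul ((hIcont.tendsto _).comp (hunif.tendsto_at hx))
  exact tendsto_setIntegral_abs_sub_pow_of_bounded hΩmeas hΩbdd.measure_lt_top.ne two_ne_zero
    (fun k => (measurable_massPreservingAction (hψseq k).continuous.measurable
      hIcont.measurable).aestronglyMeasurable)
    (fun k x hx => abs_massPreservingAction_le (hdetbdd k x hx) hIbdd) hlim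

/-- **Convergence of mass-preserving deformed templates.**
Let `Ω ⊆ ℝⁿ` be bounded and measurable and `I : ℝⁿ → ℝ` bounded continuous.  Let
`ψ, ψ_k : ℝⁿ → ℝⁿ` be `C¹` maps such that (i) `ψ_k → ψ` uniformly on `Ω`, (ii) the
Jacobian determinants `det Dψ_k → det Dψ` uniformly on `Ω`, and (iii) `|det Dψ_k| ≤ M`
on `Ω` for all `k`.  Then the mass-preserving deformed templates converge in `L²(Ω)`:
`∫_Ω | |det Dψ_k| I∘ψ_k − |det Dψ| I∘ψ |² → 0`. -/
theorem massPreserving_deformed_templates_L2_convergence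
    (n : ℕ) (Ω : Set (EuclideanSpace ℝ (Fin n)))
    (hΩbdd : Bornology.IsBounded Ω) (hΩmeas : MeasurableSet Ω)
    (I : EuclideanSpace ℝ (Fin n) → ℝ) (hIcont : Continuous I)
    (MI : ℝ) (hIbdd : ∀ x, |I x| ≤ MI)
    (ψ : EuclideanSpace ℝ (Fin n) → EuclideanSpace ℝ (Fin n))
    (ψseq : ℕ → EuclideanSpace ℝ (Fin n) → EuclideanSpace ℝ (Fin n))
    (hψ : ContDiff ℝ 1 ψ) (hψseq : ∀ k, ContDiff ℝ 1 (ψseq k))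
    (hunif : TendstoUniformlyOn (fun k x => ψseq k x) ψ atTop Ω)
    (hdetunif : TendstoUniformlyOn (fun k x => (fderiv ℝ (ψseq k) x).det)
      (fun x => (fderiv ℝ ψ x).det) atTop Ω)
    (M : ℝ) (hdetbdd : ∀ k, ∀ x ∈ Ω, |(fderiv ℝ (ψseq k) x).det| ≤ M) :
    Tendsto (fun k => ∫ x in Ω,
        |((|(fderiv ℝ (ψseq k) x).det| * I (ψseq k x))
          - (|(fderiv ℝ ψ x).det| * I (ψ x)))| ^ 2)
      atTop (nhds 0) :=
  massPreserving_deformed_templates_L2_convergence_general n Ω hΩbdd hΩmeas I hIcont MI hIbdd ψ ψseq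
    hψseq hunif hdetunif M hdetbdd
end

section
/- Let H be a separable real Hilbert space, X a real normed space, W : H → X weak-to-norm sequentially continuous, F : X → ℝ lower semicontinuous and bounded below, and γ > 0. Then the functional E : H → ℝ defined by E(ν) = γ‖ν‖_H² + F(W(ν)) attains its infimum, i.e. there exists ν* ∈ H with E(ν*) ≤ E(ν) for all ν ∈ H. -/
open Filter Topology Set
open scoped RealInnerProductSpace

/-!
The direct method of the calculus of variations. A minimizing sequence is bounded because of the
term `γ‖ν‖²` and `F` being bounded below, so by the sequential Banach–Alaoglu theorem (the dual of
the separable space `H` being `H` itself, by Riesz) a subsequence converges weakly to some `ν₀`.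
Along it `W` converges in norm, so `F (W ν₀) ≤ liminf F (W uₖ)`, and `‖ν₀‖² ≤ liminf ‖uₖ‖²` because
`2⟪uₖ, ν₀⟫ - ‖ν₀‖² ≤ ‖uₖ‖²` with left side tending to `‖ν₀‖²`; hence `ν₀` attains the infimum.
-/

theorem exists_subseq_forall_tendsto_inner {H : Type*} [NormedAddCommGroup H]
    [InnerProductSpace ℝ H] [CompleteSpace H] [TopologicalSpace.SeparableSpace H]
    {u : ℕ → H} {M : ℝ} (hu : ∀ k, ‖u k‖ ≤ M) :
    ∃ ν : H, ∃ φ : ℕ → ℕ, StrictMono φ ∧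
      ∀ η : H, Tendsto (fun k => ⟪u (φ k), η⟫) atTop (𝓝 ⟪ν, η⟫) := by
  let x : ℕ → WeakDual ℝ H := fun k => StrongDual.toWeakDual (InnerProductSpace.toDual ℝ H (u k))
  have hx : ∀ k, x k ∈ WeakDual.toStrongDual ⁻¹' Metric.closedBall 0 M := fun k => by
    simpa [x] using hu k
  obtain ⟨ψ, -, φ, hφ, hψ⟩ := WeakDual.isSeqCompact_closedBall ℝ H 0 M hx
  refine ⟨(InnerProductSpace.toDual ℝ H).symm (WeakDual.toStrongDual ψ), φ, hφ, fun η => ?_⟩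
  simpa [Function.comp_def, x] using ((WeakDual.eval_continuous η).tendsto ψ).comp hψ

theorem eventually_norm_sq_lt_add_of_tendsto_inner {H α : Type*} [NormedAddCommGroup H]
    [InnerProductSpace ℝ H] {l : Filter α} {u : α → H} {ν : H}
    (hu : ∀ η : H, Tendsto (fun k => ⟪u k, η⟫) l (𝓝 ⟪ν, η⟫)) {ε : ℝ} (hε : 0 < ε) :
    ∀ᶠ k in l, ‖ν‖ ^ 2 < ‖u k‖ ^ 2 + ε := by
  have hlim : Tendsto (fun k => 2 * ⟪u k, ν⟫ - ‖ν‖ ^ 2) l (𝓝 (‖ν‖ ^ 2)) := by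
    convert ((hu ν).const_mul 2).sub_const (‖ν‖ ^ 2) using 2
    rw [real_inner_self_eq_norm_sq]
    ring
  filter_upwards [hlim.eventually (eventually_gt_nhds (sub_lt_self _ hε))] with k hk
  nlinarith [norm_sub_sq_real (u k) ν, sq_nonneg ‖u k - ν‖]

theorem mul_norm_sq_add_le_of_tendsto_inner {H X α : Type*} [NormedAddCommGroup H]
    [InnerProductSpace ℝ H] [TopologicalSpace X] {l : Filter α} [l.NeBot] {W : H → X}
    {F : X → ℝ} (hF : LowerSemicontinuous F) {γ : ℝ} (hγ : 0 < γ) {u : α → H} {ν : H}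
    (hu : ∀ η : H, Tendsto (fun k => ⟪u k, η⟫) l (𝓝 ⟪ν, η⟫))
    (hWu : Tendsto (fun k => W (u k)) l (𝓝 (W ν))) {m : ℝ}
    (hm : Tendsto (fun k => γ * ‖u k‖ ^ 2 + F (W (u k))) l (𝓝 m)) :
    γ * ‖ν‖ ^ 2 + F (W ν) ≤ m := by
  refine le_of_forall_sub_le fun ε hε => ge_of_tendsto hm ?_
  have hFu : ∀ᶠ k in l, F (W ν) - ε / 2 < F (W (u k)) :=
    hWu.eventually (hF (W ν) _ (sub_lt_self _ (half_pos hε)))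
  have hnu : ∀ᶠ k in l, ‖ν‖ ^ 2 < ‖u k‖ ^ 2 + ε / (2 * γ) :=
    eventually_norm_sq_lt_add_of_tendsto_inner hu (div_pos hε (mul_pos two_pos hγ))
  filter_upwards [hFu, hnu] with k hFk hnk
  have : γ * ‖ν‖ ^ 2 < γ * ‖u k‖ ^ 2 + ε / 2 :=
    calc γ * ‖ν‖ ^ 2 < γ * (‖u k‖ ^ 2 + ε / (2 * γ)) := mul_lt_mul_of_pos_left hnk hγ
      _ = γ * ‖u k‖ ^ 2 + ε / 2 := by field_simp
  linarith

theorem exists_antitone_tendsto_iInf {α : Type*} [Nonempty α] {E : α → ℝ}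
    (hE : BddBelow (range E)) :
    ∃ u : ℕ → α, Antitone (fun n => E (u n)) ∧ Tendsto (fun n => E (u n)) atTop (𝓝 (⨅ a, E a)) := by
  obtain ⟨v, hv_anti, hv_lim, hv_mem⟩ := exists_seq_tendsto_sInf (range_nonempty E) hE
  choose u hu using hv_mem
  have hEu : (fun n => E (u n)) = v := funext hu
  exact ⟨u, hEu ▸ hv_anti, hEu ▸ hv_lim⟩

theorem indirect_registration_existence_general
    (H : Type) [NormedAddCommGroup H] [InnerProductSpace ℝ H] [CompleteSpace H]
    [TopologicalSpace.SeparableSpace H]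
    (X : Type) [NormedAddCommGroup X]
    (W : H → X)
    (hW : ∀ (ν : H) (νseq : ℕ → H),
      (∀ η : H, Tendsto (fun k => ⟪νseq k, η⟫) atTop (nhds ⟪ν, η⟫)) →
      Tendsto (fun k => ‖W (νseq k) - W ν‖) atTop (nhds 0))
    (F : X → ℝ) (hF : LowerSemicontinuous F) (hFbdd : BddBelow (Set.range F))
    (γ : ℝ) (hγ : 0 < γ) :
    ∃ νstar : H, ∀ ν : H,
      γ * ‖νstar‖ ^ 2 + F (W νstar) ≤ γ * ‖ν‖ ^ 2 + F (W ν) := by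
  obtain ⟨B, hB⟩ := hFbdd
  set E : H → ℝ := fun ν => γ * ‖ν‖ ^ 2 + F (W ν) with hE
  have hFB : ∀ ν, B ≤ F (W ν) := fun ν => hB ⟨W ν, rfl⟩
  have hEbdd : BddBelow (range E) :=
    ⟨B, forall_mem_range.2 fun ν => le_add_of_nonneg_of_le (by positivity) (hFB ν)⟩
  obtain ⟨u, hu_anti, hu_lim⟩ := exists_antitone_tendsto_iInf hEbdd
  -- coercivity: `γ ‖u k‖² + B ≤ E (u k) ≤ E (u 0)`
  have hu_bdd : ∀ k, ‖u k‖ ≤ √((E (u 0) - B) / γ) := fun k =>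
    Real.le_sqrt_of_sq_le <| (le_div_iff₀' hγ).2 <| by
      linarith [hu_anti (Nat.zero_le k), hFB (u k), congrFun hE (u k)]
  obtain ⟨ν₀, φ, hφ, hweak⟩ := exists_subseq_forall_tendsto_inner hu_bdd
  have hWu := tendsto_iff_norm_sub_tendsto_zero.2 (hW ν₀ _ hweak)
  have hν₀ : E ν₀ ≤ ⨅ ν, E ν :=
    mul_norm_sq_add_le_of_tendsto_inner hF hγ hweak hWu (hu_lim.comp hφ.tendsto_atTop)
  exact ⟨ν₀, fun ν => hν₀.trans (ciInf_le hEbdd ν)⟩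

/-- **Existence of minimizers for indirect registration.**
Let `H` be a separable real Hilbert space, `X` a real normed space, `W : H → X`
weak-to-norm sequentially continuous, `F : X → ℝ` lower semicontinuous and bounded below,
and `γ > 0`.  Then `E(ν) = γ‖ν‖² + F(W ν)` attains its infimum on `H`. -/
theorem indirect_registration_existence
    (H : Type) [NormedAddCommGroup H] [InnerProductSpace ℝ H] [CompleteSpace H]
    [TopologicalSpace.SeparableSpace H]
    (X : Type) [NormedAddCommGroup X] [NormedSpace ℝ X]
    (W : H → X)
    (hW : ∀ (ν : H) (νseq : ℕ → H),
      (∀ η : H, Tendsto (fun k => ⟪νseq k, η⟫) atTop (nhds ⟪ν, η⟫)) →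
      Tendsto (fun k => ‖W (νseq k) - W ν‖) atTop (nhds 0))
    (F : X → ℝ) (hF : LowerSemicontinuous F) (hFbdd : BddBelow (Set.range F))
    (γ : ℝ) (hγ : 0 < γ) :
    ∃ νstar : H, ∀ ν : H,
      γ * ‖νstar‖ ^ 2 + F (W νstar) ≤ γ * ‖ν‖ ^ 2 + F (W ν) :=
  indirect_registration_existence_general H X W hW F hF hFbdd γ hγ
end

section
/- Let H be a separable real Hilbert space, X a real normed space, Y a metric space, W : H → X weak-to-norm sequentially continuous, and G : X × Y → [0,∞) jointly continuous. Fix γ > 0 and g ∈ Y, and for each data element h ∈ Y define E_h : H → ℝ by E_h(ν) = γ‖ν‖_H² + G(W(ν), h). Let g_k → g in Y and suppose for each k that ν_k ∈ H is a minimizer of E_{g_k}. Then there exist a subsequence (ν_{k_j}) and ν̂ ∈ H such that ν_{k_j} ⇀ ν̂ weakly in H and ν̂ is a minimizer of E_g. (Stability of the indirect registration scheme.) -/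
/-!
Testing the minimality of `ν_k` against `0` gives `γ‖ν_k‖² ≤ G(W 0, g_k)`, which is bounded
since `g_k` converges, so the minimizers lie in a ball. By the sequential Banach–Alaoglu theorem
for the separable space `H`, transported to `H` by the Riesz isomorphism `H ≃ H*`, and
Bolzano–Weierstrass for the norms, a subsequence converges weakly to some `ν̂` with
`‖ν_k‖ → r ≥ ‖ν̂‖`. Along it `W ν_k → W ν̂` in norm, so for every `ν` passing to the limit in
`E_{g_k}(ν_k) ≤ E_{g_k}(ν)` gives `E_g(ν̂) ≤ γ r² + G(W ν̂, g) ≤ E_g(ν)`.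
-/

open Filter Topology Metric InnerProductSpace
open scoped RealInnerProductSpace

section WeakConvergence

variable {H : Type*} [NormedAddCommGroup H] [InnerProductSpace ℝ H]

def WeakTendsto (u : ℕ → H) (x : H) : Prop :=
  ∀ η : H, Tendsto (fun k => ⟪u k, η⟫) atTop (𝓝 ⟪x, η⟫)

theorem WeakTendsto.norm_le {u : ℕ → H} {x : H} {r : ℝ} (hux : WeakTendsto u x)
    (hr : Tendsto (fun k => ‖u k‖) atTop (𝓝 r)) : ‖x‖ ≤ r := by
  have hsq : ‖x‖ ^ 2 ≤ r * ‖x‖ := by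
    refine le_of_tendsto_of_tendsto' ?_ (hr.mul_const ‖x‖) fun k => real_inner_le_norm (u k) x
    simpa only [real_inner_self_eq_norm_sq] using hux x
  have hr0 : 0 ≤ r := ge_of_tendsto' hr fun k => norm_nonneg (u k)
  nlinarith [norm_nonneg x]

theorem exists_subseq_weakTendsto [CompleteSpace H] [TopologicalSpace.SeparableSpace H]
    {u : ℕ → H} {R : ℝ} (hu : ∀ k, ‖u k‖ ≤ R) :
    ∃ φ : ℕ → ℕ, StrictMono φ ∧ ∃ x, WeakTendsto (u ∘ φ) x := by
  let v : ℕ → WeakDual ℝ H := fun k => StrongDual.toWeakDual (toDual ℝ H (u k))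
  have hv : ∀ k, v k ∈ WeakDual.toStrongDual ⁻¹' closedBall 0 R := by simp [v, hu]
  obtain ⟨ψ, -, φ, hφ, hlim⟩ := WeakDual.isSeqCompact_closedBall ℝ H 0 R hv
  refine ⟨φ, hφ, (toDual ℝ H).symm (WeakDual.toStrongDual ψ), fun η => ?_⟩
  simpa [v, Function.comp_def, toDual_symm_apply] using
    ((WeakDual.eval_continuous η).tendsto ψ).comp hlim

theorem exists_subseq_weakTendsto_tendsto_norm [CompleteSpace H]
    [TopologicalSpace.SeparableSpace H] {u : ℕ → H} {R : ℝ} (hu : ∀ k, ‖u k‖ ≤ R) :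
    ∃ φ : ℕ → ℕ, StrictMono φ ∧ ∃ x r, WeakTendsto (u ∘ φ) x ∧
      Tendsto (fun k => ‖u (φ k)‖) atTop (𝓝 r) ∧ ‖x‖ ≤ r := by
  obtain ⟨r, -, φ₁, hφ₁, hr⟩ :=
    isCompact_Icc.tendsto_subseq fun k => (⟨norm_nonneg _, hu k⟩ : ‖u k‖ ∈ Set.Icc 0 R)
  obtain ⟨φ₂, hφ₂, x, hx⟩ := exists_subseq_weakTendsto fun k => hu (φ₁ k)
  have hr₂ : Tendsto (fun k => ‖u (φ₁ (φ₂ k))‖) atTop (𝓝 r) := hr.comp hφ₂.tendsto_atTop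
  exact ⟨φ₁ ∘ φ₂, hφ₁.comp hφ₂, x, r, hx, hr₂, hx.norm_le hr₂⟩

end WeakConvergence

section Minimizers

variable {H : Type*} [NormedAddCommGroup H] {γ : ℝ}

theorem mul_norm_sq_le_of_isMinimizer {F : H → ℝ} (hF : ∀ ν, 0 ≤ F ν) {ν₀ : H}
    (hmin : ∀ ν, γ * ‖ν₀‖ ^ 2 + F ν₀ ≤ γ * ‖ν‖ ^ 2 + F ν) : γ * ‖ν₀‖ ^ 2 ≤ F 0 := by
  have h₀ := hmin 0
  rw [norm_zero] at h₀
  linarith [hF ν₀]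

theorem exists_forall_norm_le_of_mul_norm_sq_le (hγ : 0 < γ) {u : ℕ → H} {c : ℕ → ℝ}
    (hc : BddAbove (Set.range c)) (hu : ∀ k, γ * ‖u k‖ ^ 2 ≤ c k) :
    ∃ R, ∀ k, ‖u k‖ ≤ R := by
  obtain ⟨M, hM⟩ := hc
  refine ⟨M / γ + 1, fun k => ?_⟩
  have hsq : ‖u k‖ ^ 2 ≤ M / γ := by
    rw [le_div_iff₀ hγ]
    linarith [hu k, hM ⟨k, rfl⟩]
  nlinarith [sq_nonneg (‖u k‖ - 1), norm_nonneg (u k)]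

end Minimizers

theorem indirect_registration_stability_general
    (H : Type) [NormedAddCommGroup H] [InnerProductSpace ℝ H] [CompleteSpace H]
    [TopologicalSpace.SeparableSpace H]
    (X : Type) [NormedAddCommGroup X]
    (Y : Type) [MetricSpace Y]
    (W : H → X)
    (hW : ∀ (ν : H) (νseq : ℕ → H),
      (∀ η : H, Tendsto (fun k => ⟪νseq k, η⟫) atTop (nhds ⟪ν, η⟫)) →
      Tendsto (fun k => ‖W (νseq k) - W ν‖) atTop (nhds 0))
    (G : X × Y → ℝ) (hGcont : Continuous G) (hGnonneg : ∀ p, 0 ≤ G p)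
    (γ : ℝ) (hγ : 0 < γ) (g : Y)
    (gseq : ℕ → Y) (hgconv : Tendsto gseq atTop (nhds g))
    (νseq : ℕ → H)
    (hmin : ∀ k, ∀ ν : H,
      γ * ‖νseq k‖ ^ 2 + G (W (νseq k), gseq k) ≤ γ * ‖ν‖ ^ 2 + G (W ν, gseq k)) :
    ∃ (sub : ℕ → ℕ), StrictMono sub ∧ ∃ νhat : H,
      (∀ η : H, Tendsto (fun j => ⟪νseq (sub j), η⟫) atTop (nhds ⟪νhat, η⟫)) ∧
      (∀ ν : H, γ * ‖νhat‖ ^ 2 + G (W νhat, g) ≤ γ * ‖ν‖ ^ 2 + G (W ν, g)) := by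
  have hG₀ : Tendsto (fun k => G (W 0, gseq k)) atTop (𝓝 (G (W 0, g))) :=
    (hGcont.tendsto _).comp (tendsto_const_nhds.prodMk_nhds hgconv)
  obtain ⟨R, hR⟩ := exists_forall_norm_le_of_mul_norm_sq_le hγ hG₀.bddAbove_range
    fun k => mul_norm_sq_le_of_isMinimizer (fun ν => hGnonneg (W ν, gseq k)) (hmin k)
  obtain ⟨φ, hφ, νhat, r, hweak, hnorm, hνhat⟩ := exists_subseq_weakTendsto_tendsto_norm hR
  refine ⟨φ, hφ, νhat, hweak, fun ν => ?_⟩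
  have hgφ : Tendsto (gseq ∘ φ) atTop (𝓝 g) := hgconv.comp hφ.tendsto_atTop
  have hWφ : Tendsto (fun j => W (νseq (φ j))) atTop (𝓝 (W νhat)) :=
    tendsto_iff_norm_sub_tendsto_zero.2 (hW νhat _ hweak)
  have hlim : γ * r ^ 2 + G (W νhat, g) ≤ γ * ‖ν‖ ^ 2 + G (W ν, g) :=
    le_of_tendsto_of_tendsto'
      (((hnorm.pow 2).const_mul γ).add ((hGcont.tendsto _).comp (hWφ.prodMk_nhds hgφ)))
      (tendsto_const_nhds.add ((hGcont.tendsto _).comp (tendsto_const_nhds.prodMk_nhds hgφ)))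
      fun j => hmin (φ j) ν
  have hnorm_sq : γ * ‖νhat‖ ^ 2 ≤ γ * r ^ 2 := by gcongr
  linarith

/-- **Stability of the indirect registration scheme.**
`H` is a separable real Hilbert space, `X` a real normed space, `Y` a metric space,
`W : H → X` weak-to-norm sequentially continuous, `G : X × Y → [0,∞)` jointly continuous.
Fix `γ > 0`, `g ∈ Y` and set `E_h(ν) = γ‖ν‖² + G(W ν, h)`.  If `g_k → g` and each `ν_k`
minimizes `E_{g_k}`, then some subsequence of `(ν_k)` converges weakly to a minimizer of
`E_g`. -/
theorem indirect_registration_stability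
    (H : Type) [NormedAddCommGroup H] [InnerProductSpace ℝ H] [CompleteSpace H]
    [TopologicalSpace.SeparableSpace H]
    (X : Type) [NormedAddCommGroup X] [NormedSpace ℝ X]
    (Y : Type) [MetricSpace Y]
    (W : H → X)
    (hW : ∀ (ν : H) (νseq : ℕ → H),
      (∀ η : H, Tendsto (fun k => ⟪νseq k, η⟫) atTop (nhds ⟪ν, η⟫)) →
      Tendsto (fun k => ‖W (νseq k) - W ν‖) atTop (nhds 0))
    (G : X × Y → ℝ) (hGcont : Continuous G) (hGnonneg : ∀ p, 0 ≤ G p)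
    (γ : ℝ) (hγ : 0 < γ) (g : Y)
    (gseq : ℕ → Y) (hgconv : Tendsto gseq atTop (nhds g))
    (νseq : ℕ → H)
    (hmin : ∀ k, ∀ ν : H,
      γ * ‖νseq k‖ ^ 2 + G (W (νseq k), gseq k) ≤ γ * ‖ν‖ ^ 2 + G (W ν, gseq k)) :
    ∃ (sub : ℕ → ℕ), StrictMono sub ∧ ∃ νhat : H,
      (∀ η : H, Tendsto (fun j => ⟪νseq (sub j), η⟫) atTop (nhds ⟪νhat, η⟫)) ∧
      (∀ ν : H, γ * ‖νhat‖ ^ 2 + G (W νhat, g) ≤ γ * ‖ν‖ ^ 2 + G (W ν, g)) :=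
  indirect_registration_stability_general H X Y W hW G hGcont hGnonneg γ hγ g gseq hgconv νseq hmin
end

section
/- Let H be a separable real Hilbert space, X a real normed space, Y a metric space, W : H → X weak-to-norm sequentially continuous, T : X → Y continuous, and D : Y × Y → [0,∞) jointly continuous with the property that D(y, y') = 0 implies y = y'. Suppose there exists ν* ∈ H with T(W(ν*)) = g for the ideal data g ∈ Y. Let (δ_k) be positive reals with δ_k → 0, let (g_k) ⊂ Y satisfy D(g, g_k) ≤ δ_k² and g_k → g, and let (γ_k) be positive reals with γ_k → 0 and δ_k²/γ_k → 0. If for each k, ν_k ∈ H is a minimizer of ν ↦ γ_k‖ν‖_H² + D(T(W(ν)), g_k), then there exist a subsequence (ν_{k_j}) and ν̃ ∈ H such that ν_{k_j} ⇀ ν̃ weakly in H and T(W(ν̃)) = g. (Convergence of the indirect registration scheme as the data error tends to zero.) -/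
/-!
Comparing each minimizer with the exact solution `ν*` gives
`γ_k‖ν_k‖² + D(T(W ν_k), g_k) ≤ γ_k‖ν*‖² + δ_k²`. Since `δ_k²/γ_k` is bounded, the `ν_k` are
bounded, so by sequential Banach–Alaoglu and the Riesz representation a subsequence converges
weakly to some `ν̃`; and since `γ_k, δ_k → 0` the data fit `D(T(W ν_k), g_k)` tends to `0`.
Along the subsequence `W ν_k → W ν̃` in norm, so by continuity `D(T(W ν̃), g) = 0`, i.e.
`T(W ν̃) = g`.
-/

open Filter Topology
open scoped RealInnerProductSpace

theorem exists_subseq_tendsto_inner_of_norm_le {H : Type*} [NormedAddCommGroup H]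
    [InnerProductSpace ℝ H] [CompleteSpace H] [TopologicalSpace.SeparableSpace H]
    {M : ℝ} {v : ℕ → H} (hv : ∀ k, ‖v k‖ ≤ M) :
    ∃ φ : ℕ → ℕ, StrictMono φ ∧ ∃ ν : H,
      ∀ η : H, Tendsto (fun j => ⟪v (φ j), η⟫) atTop (𝓝 ⟪ν, η⟫) := by
  let f : ℕ → WeakDual ℝ H :=
    fun k => StrongDual.toWeakDual (InnerProductSpace.toDual ℝ H (v k))
  have hf : ∀ k, f k ∈ WeakDual.toStrongDual ⁻¹' Metric.closedBall 0 M := by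
    simpa [f] using hv
  obtain ⟨ψ, -, φ, hφ, hψ⟩ := WeakDual.isSeqCompact_closedBall ℝ H 0 M hf
  refine ⟨φ, hφ, (InnerProductSpace.toDual ℝ H).symm ψ.toStrongDual, fun η => ?_⟩
  rw [InnerProductSpace.toDual_symm_apply]
  exact ((WeakDual.eval_continuous η).tendsto ψ).comp hψ

theorem le_add_div_of_mul_add_le {γ a b r s : ℝ} (hγ : 0 < γ) (hr : 0 ≤ r)
    (h : γ * a + r ≤ γ * b + s) : a ≤ b + s / γ := by
  refine le_of_mul_le_mul_left ?_ hγ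
  rw [mul_add, mul_div_cancel₀ _ hγ.ne']
  linarith

theorem indirect_registration_convergence_general
    (H : Type) [NormedAddCommGroup H] [InnerProductSpace ℝ H] [CompleteSpace H]
    [TopologicalSpace.SeparableSpace H]
    (X : Type) [NormedAddCommGroup X] [NormedSpace ℝ X]
    (Y : Type) [MetricSpace Y]
    (W : H → X)
    (hW : ∀ (ν : H) (νseq : ℕ → H),
      (∀ η : H, Tendsto (fun k => ⟪νseq k, η⟫) atTop (nhds ⟪ν, η⟫)) →
      Tendsto (fun k => ‖W (νseq k) - W ν‖) atTop (nhds 0))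
    (T : X → Y) (hT : Continuous T)
    (D : Y × Y → ℝ) (hDcont : Continuous D) (hDnonneg : ∀ p, 0 ≤ D p)
    (hDsep : ∀ y y' : Y, D (y, y') = 0 → y = y')
    (g : Y) (νstar : H) (hexact : T (W νstar) = g)
    (δ : ℕ → ℝ) (hδ0 : Tendsto δ atTop (nhds 0))
    (gseq : ℕ → Y) (hgD : ∀ k, D (g, gseq k) ≤ (δ k) ^ 2)
    (hgconv : Tendsto gseq atTop (nhds g))
    (γ : ℕ → ℝ) (hγpos : ∀ k, 0 < γ k) (hγ0 : Tendsto γ atTop (nhds 0))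
    (hrate : Tendsto (fun k => (δ k) ^ 2 / γ k) atTop (nhds 0))
    (νseq : ℕ → H)
    (hmin : ∀ k, ∀ ν : H,
      γ k * ‖νseq k‖ ^ 2 + D (T (W (νseq k)), gseq k)
        ≤ γ k * ‖ν‖ ^ 2 + D (T (W ν), gseq k)) :
    ∃ (sub : ℕ → ℕ), StrictMono sub ∧ ∃ νtilde : H,
      (∀ η : H, Tendsto (fun j => ⟪νseq (sub j), η⟫) atTop (nhds ⟪νtilde, η⟫)) ∧
      T (W νtilde) = g := by
  obtain ⟨B, hB⟩ := hrate.bddAbove_range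
  have hcompare : ∀ k, γ k * ‖νseq k‖ ^ 2 + D (T (W (νseq k)), gseq k)
      ≤ γ k * ‖νstar‖ ^ 2 + δ k ^ 2 := fun k =>
    (hmin k νstar).trans (by rw [hexact]; gcongr; exact hgD k)
  have hbdd : ∀ k, ‖νseq k‖ ≤ √(‖νstar‖ ^ 2 + B) := fun k =>
    Real.le_sqrt_of_sq_le <| (le_add_div_of_mul_add_le (hγpos k) (hDnonneg _) (hcompare k)).trans
      (by gcongr; exact hB ⟨k, rfl⟩)
  have hfit : Tendsto (fun k => D (T (W (νseq k)), gseq k)) atTop (𝓝 0) := by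
    have hbound : Tendsto (fun k => γ k * ‖νstar‖ ^ 2 + δ k ^ 2) atTop (𝓝 0) := by
      simpa using (hγ0.mul_const _).add (hδ0.pow 2)
    refine squeeze_zero (fun k => hDnonneg _) (fun k => ?_) hbound
    nlinarith [hcompare k, hγpos k, sq_nonneg ‖νseq k‖]
  obtain ⟨φ, hφ, νtilde, hweak⟩ := exists_subseq_tendsto_inner_of_norm_le hbdd
  refine ⟨φ, hφ, νtilde, hweak, hDsep _ _ ?_⟩
  have hdata : Tendsto (fun j => (T (W (νseq (φ j))), gseq (φ j))) atTop
      (𝓝 (T (W νtilde), g)) :=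
    ((hT.tendsto _).comp (tendsto_iff_norm_sub_tendsto_zero.mpr (hW _ _ hweak))).prodMk_nhds
      (hgconv.comp hφ.tendsto_atTop)
  exact tendsto_nhds_unique ((hDcont.tendsto _).comp hdata) (hfit.comp hφ.tendsto_atTop)

/-- **Convergence of the indirect registration scheme as the data error tends to zero.**
`W : H → X` is weak-to-norm sequentially continuous, `T : X → Y` continuous and
`D : Y × Y → [0,∞)` jointly continuous with `D y y' = 0 → y = y'`.  Suppose
`T (W ν*) = g` for some `ν*`.  Let `δ_k → 0`, `D(g, g_k) ≤ δ_k²`, `g_k → g`, `γ_k → 0` and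
`δ_k²/γ_k → 0`, and let each `ν_k` minimize `ν ↦ γ_k‖ν‖² + D(T (W ν), g_k)`.  Then some
subsequence of `(ν_k)` converges weakly to a `ν̃` with `T (W ν̃) = g`. -/
theorem indirect_registration_convergence
    (H : Type) [NormedAddCommGroup H] [InnerProductSpace ℝ H] [CompleteSpace H]
    [TopologicalSpace.SeparableSpace H]
    (X : Type) [NormedAddCommGroup X] [NormedSpace ℝ X]
    (Y : Type) [MetricSpace Y]
    (W : H → X)
    (hW : ∀ (ν : H) (νseq : ℕ → H),
      (∀ η : H, Tendsto (fun k => ⟪νseq k, η⟫) atTop (nhds ⟪ν, η⟫)) →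
      Tendsto (fun k => ‖W (νseq k) - W ν‖) atTop (nhds 0))
    (T : X → Y) (hT : Continuous T)
    (D : Y × Y → ℝ) (hDcont : Continuous D) (hDnonneg : ∀ p, 0 ≤ D p)
    (hDsep : ∀ y y' : Y, D (y, y') = 0 → y = y')
    (g : Y) (νstar : H) (hexact : T (W νstar) = g)
    (δ : ℕ → ℝ) (hδpos : ∀ k, 0 < δ k) (hδ0 : Tendsto δ atTop (nhds 0))
    (gseq : ℕ → Y) (hgD : ∀ k, D (g, gseq k) ≤ (δ k) ^ 2)
    (hgconv : Tendsto gseq atTop (nhds g))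
    (γ : ℕ → ℝ) (hγpos : ∀ k, 0 < γ k) (hγ0 : Tendsto γ atTop (nhds 0))
    (hrate : Tendsto (fun k => (δ k) ^ 2 / γ k) atTop (nhds 0))
    (νseq : ℕ → H)
    (hmin : ∀ k, ∀ ν : H,
      γ k * ‖νseq k‖ ^ 2 + D (T (W (νseq k)), gseq k)
        ≤ γ k * ‖ν‖ ^ 2 + D (T (W ν), gseq k)) :
    ∃ (sub : ℕ → ℕ), StrictMono sub ∧ ∃ νtilde : H,
      (∀ η : H, Tendsto (fun j => ⟪νseq (sub j), η⟫) atTop (nhds ⟪νtilde, η⟫)) ∧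
      T (W νtilde) = g :=
  indirect_registration_convergence_general H X Y W hW T hT D hDcont hDnonneg hDsep g νstar hexact δ
    hδ0 gseq hgD hgconv γ hγpos hγ0 hrate νseq hmin
end

section
/- Let ν, η be time-dependent vector fields as above, let φ^ε denote the two-parameter flow of ν + εη with φ = φ⁰ spatially C¹ and all spatial derivatives Dφ(s,t,y) invertible, and let I : ℝⁿ → ℝ be continuously differentiable. Fix x ∈ ℝⁿ and assume that ε ↦ φ^ε(1,0,x) is differentiable at ε = 0 with derivative −∫_0^1 [ Dφ(0,t, φ(1,0,x)) ]⁻¹ ( η(t, φ(1,t,x)) ) dt. Then the map ε ↦ I(φ^ε(1,0,x)) — the geometrically deformed template 𝒲(ν + εη, I) evaluated at x — is differentiable at ε = 0 with derivative −∫_0^1 ⟨ ∇(I ∘ φ(t,0,·))( φ(1,t,x) ), η(t, φ(1,t,x)) ⟩_{ℝⁿ} dt. -/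
/-!
Write `φ` for the flow of `ν` and `y = φ(1,0,x)`. Solutions of the flow's integral equation are
unique, by an integral Gronwall inequality, so `φ(τ,t,φ(s,τ,x)) = φ(s,t,x)`; differentiating
`φ(0,t,·) ∘ φ(t,0,·) = id` shows that `[Dφ(0,t,y)]⁻¹ = Dφ(t,0,φ(1,t,x))`. The chain rule for
`I ∘ φ(t,0,·)` at `φ(1,t,x)` then identifies the integrand of the claimed derivative with
`DI(y) ([Dφ(0,t,y)]⁻¹ η(t, φ(1,t,x)))`, and the theorem is the chain rule for `ε ↦ I(φ^ε(1,0,x))`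
once `DI(y)` is moved inside the integral. That last step needs the vector integrand to be
integrable: Gronwall again bounds `‖Dφ(t,0,·)‖` uniformly, and `t ↦ Dφ(0,t,y)` is measurable as
a limit of difference quotients of the continuous curves `t ↦ φ(0,t,z)`.
-/

open MeasureTheory Set Filter Topology intervalIntegral
open scoped RealInnerProductSpace

section Measurability

variable {α : Type*} [MeasurableSpace α] {μ : Measure α}

theorem SimpleFunc.aestronglyMeasurable_apply {E F : Type*} [MeasurableSpace E]
    [TopologicalSpace F] [TopologicalSpace.PseudoMetrizableSpace F] {f : α → E → F}
    (hf : ∀ c, AEStronglyMeasurable (f · c) μ) (u : SimpleFunc α E) :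
    AEStronglyMeasurable (fun a => f a (u a)) μ := by
  have hcover : (⋃ c : u.range, u ⁻¹' {(c : E)}) = univ :=
    eq_univ_of_forall fun a => mem_iUnion.2 ⟨⟨u a, u.mem_range_self a⟩, rfl⟩
  rw [← Measure.restrict_univ (μ := μ), ← hcover, aestronglyMeasurable_iUnion_iff]
  intro c
  refine (hf c).restrict.congr ?_
  filter_upwards [ae_restrict_mem (u.measurableSet_preimage {(c : E)})] with a ha
  rw [show u a = c from ha]

theorem aestronglyMeasurable_apply_of_continuous {E F : Type*} [TopologicalSpace E]
    [TopologicalSpace F] [TopologicalSpace.PseudoMetrizableSpace F] {f : α → E → F}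
    (hf : ∀ c, AEStronglyMeasurable (f · c) μ) (hcont : ∀ᵐ a ∂μ, Continuous (f a))
    {u : α → E} (hu : AEStronglyMeasurable u μ) :
    AEStronglyMeasurable (fun a => f a (u a)) μ := by
  let _ : MeasurableSpace E := borel E
  refine aestronglyMeasurable_of_tendsto_ae atTop
    (fun k => SimpleFunc.aestronglyMeasurable_apply hf (hu.stronglyMeasurable_mk.approx k)) ?_
  filter_upwards [hcont, hu.ae_eq_mk] with a ha hua
  rw [hua]
  exact (ha.tendsto _).comp (hu.stronglyMeasurable_mk.tendsto_approx a)

theorem aestronglyMeasurable_continuousLinearMap_of_apply {𝕜 E F : Type*}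
    [NontriviallyNormedField 𝕜] [CompleteSpace 𝕜] [NormedAddCommGroup E] [NormedSpace 𝕜 E]
    [FiniteDimensional 𝕜 E] [NormedAddCommGroup F] [NormedSpace 𝕜 F] {L : α → E →L[𝕜] F}
    (hL : ∀ v, AEStronglyMeasurable (fun a => L a v) μ) : AEStronglyMeasurable L μ := by
  let b := Module.finBasis 𝕜 E
  have hsum : L = fun a => ∑ i, (LinearMap.toContinuousLinearMap (b.coord i)).smulRight
      (L a (b i)) := by
    ext1 a; ext1 x
    simp only [FunLike.coe_sum, Finset.sum_apply, ContinuousLinearMap.smulRight_apply,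
      LinearMap.coe_toContinuousLinearMap', Module.Basis.coord_apply]
    conv_lhs => rw [← b.sum_repr x]
    simp only [map_sum, map_smul]
  rw [hsum]
  refine Finset.aestronglyMeasurable_fun_sum _ fun i _ => ?_
  exact (ContinuousLinearMap.smulRightL 𝕜 E F
    (LinearMap.toContinuousLinearMap (b.coord i))).continuous.comp_aestronglyMeasurable (hL _)

theorem aestronglyMeasurable_fderiv_apply {E F : Type*} [NormedAddCommGroup E]
    [NormedSpace ℝ E] [NormedAddCommGroup F] [NormedSpace ℝ F] {f : α → E → F} {y : E}
    (hf : ∀ z, AEStronglyMeasurable (f · z) μ) (hd : ∀ᵐ a ∂μ, DifferentiableAt ℝ (f a) y)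
    (v : E) : AEStronglyMeasurable (fun a => fderiv ℝ (f a) y v) μ := by
  refine aestronglyMeasurable_of_tendsto_ae atTop
    (f := fun (k : ℕ) a => (k : ℝ) • (f a (y + (k : ℝ)⁻¹ • v) - f a y))
    (fun k => ((hf _).sub (hf _)).const_smul _) ?_
  filter_upwards [hd] with a ha
  refine ha.hasFDerivAt.lim v ?_
  simpa using tendsto_natCast_atTop_atTop (R := ℝ)

end Measurability

theorem measurable_ringInverse {R : Type*} [NormedRing R] [HasSummableGeomSeries R]
    [MeasurableSpace R] [BorelSpace R] : Measurable (Ring.inverse : R → R) := by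
  classical
  have hunits : IsOpen {x : R | IsUnit x} := Units.isOpen
  have hpiece : {x : R | IsUnit x}.piecewise Ring.inverse 0 = Ring.inverse := by
    ext1 x
    by_cases hx : IsUnit x
    · exact piecewise_eq_of_mem {x : R | IsUnit x} _ _ hx
    · rw [piecewise_eq_of_notMem {x : R | IsUnit x} _ _ hx, Ring.inverse_non_unit x hx,
        Pi.zero_apply]
  rw [← hpiece]
  refine ContinuousOn.measurable_piecewise ?_ continuousOn_const hunits.measurableSet
  intro x hx
  exact (NormedRing.inverse_continuousAt (IsUnit.unit hx)).continuousWithinAt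

theorem ContinuousLinearMap.inverse_fderiv_of_leftInverse {𝕜 E F : Type*}
    [NontriviallyNormedField 𝕜] [NormedAddCommGroup E] [NormedSpace 𝕜 E]
    [NormedAddCommGroup F] [NormedSpace 𝕜 F] {f : E → F} {g : F → E} {x : E}
    (hgf : Function.LeftInverse g f) (hfg : Function.RightInverse g f)
    (hf : DifferentiableAt 𝕜 f x) (hg : DifferentiableAt 𝕜 g (f x)) :
    (fderiv 𝕜 f x).inverse = fderiv 𝕜 g (f x) := by
  have hgf' : (fderiv 𝕜 g (f x)).comp (fderiv 𝕜 f x) = ContinuousLinearMap.id 𝕜 E := by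
    rw [← fderiv_comp x hg hf, hgf.comp_eq_id, fderiv_id]
  have hfg' : (fderiv 𝕜 f x).comp (fderiv 𝕜 g (f x)) = ContinuousLinearMap.id 𝕜 F := by
    have h := fderiv_comp (f x) (by rwa [hgf x] : DifferentiableAt 𝕜 f (g (f x))) hg
    rw [hfg.comp_eq_id, fderiv_id, hgf x] at h
    exact h.symm
  exact ContinuousLinearMap.inverse_equiv (ContinuousLinearEquiv.equivOfInverse _ _
    (fun v => congr($hgf' v)) (fun w => congr($hfg' w)))

theorem inner_gradient_comp {E F : Type*} [NormedAddCommGroup E] [InnerProductSpace ℝ E]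
    [CompleteSpace E] [NormedAddCommGroup F] [NormedSpace ℝ F] {I : F → ℝ} {g : E → F}
    {y : E} (hI : DifferentiableAt ℝ I (g y)) (hg : DifferentiableAt ℝ g y) (v : E) :
    ⟪gradient (fun z => I (g z)) y, v⟫ = fderiv ℝ I (g y) (fderiv ℝ g y v) := by
  rw [gradient, InnerProductSpace.toDual_symm_apply]
  exact congr($(fderiv_comp y hI hg) v)

section Gronwall

variable {l g : ℝ → ℝ}

/-- One step of Gronwall's inequality, on an interval where `∫ l ≤ 1/2`: there the maximum `M`
of `g` satisfies `M ≤ D + M / 2`, so `M ≤ 2 D`. -/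
theorem add_integral_le_mul_exp_of_integral_le_half {x t D : ℝ} (hxt : x ≤ t)
    (hl : IntegrableOn l (Icc x t)) (hl0 : ∀ r ∈ Icc x t, 0 ≤ l r)
    (hg : ContinuousOn g (Icc x t)) (hg0 : ∀ r ∈ Icc x t, 0 ≤ g r)
    (hbound : ∀ r ∈ Icc x t, g r ≤ D + ∫ q in x..r, l q * g q)
    (hsmall : ∫ q in x..t, l q ≤ 1 / 2) :
    D + ∫ q in x..t, l q * g q ≤ D * Real.exp (2 * ∫ q in x..t, l q) := by
  obtain ⟨w, hw, hwmax⟩ := isCompact_Icc.exists_isMaxOn (nonempty_Icc.2 hxt) hg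
  have hx : x ∈ Icc x t := left_mem_Icc.2 hxt
  have hδ : 0 ≤ ∫ q in x..t, l q := integral_nonneg hxt hl0
  have hM0 : 0 ≤ g w := hg0 w hw
  have hD : 0 ≤ D := by simpa using (hg0 x hx).trans (hbound x hx)
  have hle_max : ∀ r ∈ Icc x t, ∫ q in x..r, l q * g q ≤ g w * ∫ q in x..t, l q := by
    intro r hr
    have hsub : uIcc x r ⊆ Icc x t := uIcc_subset_Icc hx hr
    calc ∫ q in x..r, l q * g q ≤ ∫ q in x..r, l q * g w := by
          refine integral_mono_on hr.1 ((hl.mul_continuousOn hg isCompact_Icc).mono_set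
            hsub).intervalIntegrable ((hl.mono_set hsub).intervalIntegrable.mul_const _) ?_
          intro q hq
          have hq' : q ∈ Icc x t := ⟨hq.1, hq.2.trans hr.2⟩
          exact mul_le_mul_of_nonneg_left (hwmax hq') (hl0 q hq')
      _ = g w * ∫ q in x..r, l q := by rw [intervalIntegral.integral_mul_const, mul_comm]
      _ ≤ g w * ∫ q in x..t, l q := by
          refine mul_le_mul_of_nonneg_left (integral_mono_interval le_rfl hr.1 hr.2 ?_
            (hl.mono_set (uIcc_subset_Icc hx (right_mem_Icc.2 hxt))).intervalIntegrable) hM0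
          filter_upwards [ae_restrict_mem measurableSet_Ioc] with q hq
          exact hl0 q ⟨hq.1.le, hq.2⟩
  have hM : g w ≤ 2 * D := by nlinarith [hbound w hw, hle_max w hw]
  calc D + ∫ q in x..t, l q * g q ≤ D + g w * ∫ q in x..t, l q := by
        linarith [hle_max t (right_mem_Icc.2 hxt)]
    _ ≤ D * (2 * (∫ q in x..t, l q) + 1) := by nlinarith
    _ ≤ D * Real.exp (2 * ∫ q in x..t, l q) :=
        mul_le_mul_of_nonneg_left (Real.add_one_le_exp _) hD

theorem add_integral_le_add_integral_mul_exp_of_le_half {a b C x t : ℝ}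
    (hl : IntegrableOn l (Icc a b)) (hl0 : ∀ t ∈ Icc a b, 0 ≤ l t)
    (hg : ContinuousOn g (Icc a b)) (hg0 : ∀ t ∈ Icc a b, 0 ≤ g t)
    (hbound : ∀ t ∈ Icc a b, g t ≤ C + ∫ r in a..t, l r * g r) (hx : x ∈ Icc a b)
    (ht : t ∈ Icc a b) (hxt : x ≤ t) (hsmall : ∫ q in x..t, l q ≤ 1 / 2) :
    C + ∫ r in a..t, l r * g r
      ≤ (C + ∫ r in a..x, l r * g r) * Real.exp (2 * ∫ q in x..t, l q) := by
  have hlg : IntegrableOn (fun r => l r * g r) (Icc a b) := hl.mul_continuousOn hg isCompact_Icc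
  have hsub : Icc x t ⊆ Icc a b := Icc_subset_Icc hx.1 ht.2
  have hsplit : ∀ r ∈ Icc x t,
      ∫ q in a..r, l q * g q = (∫ q in a..x, l q * g q) + ∫ q in x..r, l q * g q :=
    fun r hr => (integral_add_adjacent_intervals
      (hlg.mono_set (uIcc_subset_Icc (left_mem_Icc.2 (hx.1.trans hx.2)) hx)).intervalIntegrable
      (hlg.mono_set (uIcc_subset_Icc hx (hsub hr))).intervalIntegrable).symm
  rw [hsplit t (right_mem_Icc.2 hxt), ← add_assoc]
  exact add_integral_le_mul_exp_of_integral_le_half hxt (hl.mono_set hsub)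
    (fun r hr => hl0 r (hsub hr)) (hg.mono hsub) (fun r hr => hg0 r (hsub hr))
    (fun r hr => by simpa only [hsplit r hr, add_assoc] using hbound r (hsub hr)) hsmall

/-- Gronwall's inequality in integral form; the factor `2` comes from the halving step above. -/
theorem le_mul_exp_integral_of_le_add_integral {a b C : ℝ}
    (hl : IntegrableOn l (Icc a b)) (hl0 : ∀ t ∈ Icc a b, 0 ≤ l t)
    (hg : ContinuousOn g (Icc a b)) (hg0 : ∀ t ∈ Icc a b, 0 ≤ g t)
    (hbound : ∀ t ∈ Icc a b, g t ≤ C + ∫ r in a..t, l r * g r) :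
    ∀ t ∈ Icc a b, g t ≤ C * Real.exp (2 * ∫ r in a..t, l r) := by
  intro s hs
  have hab : a ≤ b := hs.1.trans hs.2
  have hsub_ab : uIcc a b ⊆ Icc a b := uIcc_subset_Icc (left_mem_Icc.2 hab) (right_mem_Icc.2 hab)
  set G : ℝ → ℝ := fun t => C + ∫ r in a..t, l r * g r
  set Λ : ℝ → ℝ := fun t => ∫ r in a..t, l r
  have hG : ContinuousOn G (Icc a b) := continuousOn_const.add <| by
    simpa only [uIcc_of_le hab] using continuousOn_primitive_interval
      ((hl.mul_continuousOn hg isCompact_Icc).mono_set hsub_ab)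
  have hΛ : ContinuousOn Λ (Icc a b) := by
    simpa only [uIcc_of_le hab] using continuousOn_primitive_interval (hl.mono_set hsub_ab)
  suffices hGle : Icc a b ⊆ {t | G t ≤ C * Real.exp (2 * Λ t)} from
    (hbound s hs).trans (hGle hs)
  refine IsClosed.Icc_subset_of_forall_mem_nhdsWithin ?_ (by simp [G, Λ]) ?_
  · rw [inter_comm]
    exact isClosed_Icc.isClosed_le hG
      (continuousOn_const.mul (Real.continuous_exp.comp_continuousOn (continuousOn_const.mul hΛ)))
  rintro x ⟨hxG, hxa, hxb⟩
  have hx : x ∈ Icc a b := ⟨hxa, hxb.le⟩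
  have hIcc : Icc a b ∈ 𝓝[>] x :=
    mem_of_superset (Ioo_mem_nhdsGT hxb) fun t ht => ⟨hxa.trans ht.1.le, ht.2.le⟩
  have hnear : ∀ᶠ t in 𝓝[>] x, Λ t < Λ x + 1 / 2 :=
    (tendsto_order.1 ((hΛ x hx).tendsto.mono_left (nhdsWithin_le_of_mem hIcc))).2 _
      (by linarith)
  filter_upwards [hnear, Ioo_mem_nhdsGT hxb] with t hΛt ⟨hxt, htb⟩
  have ht : t ∈ Icc a b := ⟨hxa.trans hxt.le, htb.le⟩
  have hΛsplit : Λ t = Λ x + ∫ q in x..t, l q := (integral_add_adjacent_intervals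
    (hl.mono_set (uIcc_subset_Icc (left_mem_Icc.2 hab) hx)).intervalIntegrable
    (hl.mono_set (uIcc_subset_Icc hx ht)).intervalIntegrable).symm
  calc G t ≤ G x * Real.exp (2 * ∫ q in x..t, l q) :=
        add_integral_le_add_integral_mul_exp_of_le_half hl hl0 hg hg0 hbound hx ht hxt.le
          (by linarith)
    _ ≤ C * Real.exp (2 * Λ x) * Real.exp (2 * ∫ q in x..t, l q) :=
        mul_le_mul_of_nonneg_right hxG (Real.exp_nonneg _)
    _ = C * Real.exp (2 * Λ t) := by rw [mul_assoc, ← Real.exp_add, ← mul_add, hΛsplit]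

theorem le_mul_exp_integral_of_le_add_integral_rev {a b C : ℝ}
    (hl : IntegrableOn l (Icc a b)) (hl0 : ∀ t ∈ Icc a b, 0 ≤ l t)
    (hg : ContinuousOn g (Icc a b)) (hg0 : ∀ t ∈ Icc a b, 0 ≤ g t)
    (hbound : ∀ t ∈ Icc a b, g t ≤ C + ∫ r in t..b, l r * g r) :
    ∀ t ∈ Icc a b, g t ≤ C * Real.exp (2 * ∫ r in t..b, l r) := by
  intro s hs
  have hab : a ≤ b := hs.1.trans hs.2
  have hrefl : ∀ t ∈ Icc a b, a + b - t ∈ Icc a b := fun t ht =>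
    ⟨by linarith [ht.2], by linarith [ht.1]⟩
  have hint_refl : ∀ {f : ℝ → ℝ}, IntegrableOn f (Icc a b) →
      IntegrableOn (fun r => f (a + b - r)) (Icc a b) := fun {f} hf => by
    have := ((intervalIntegrable_iff_integrableOn_Icc_of_le hab).2 hf).comp_sub_left (a + b)
    rw [add_sub_cancel_right, add_sub_cancel_left] at this
    exact (intervalIntegrable_iff_integrableOn_Icc_of_le hab).1 this.symm
  have hintegral_refl : ∀ (f : ℝ → ℝ) (t : ℝ),
      ∫ r in a..t, f (a + b - r) = ∫ r in a + b - t..b, f r := fun f t => by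
    rw [integral_comp_sub_left, add_sub_cancel_left]
  have := le_mul_exp_integral_of_le_add_integral (g := fun r => g (a + b - r)) (hint_refl hl)
    (fun t ht => hl0 _ (hrefl t ht)) (hg.comp (continuousOn_const.sub continuousOn_id) hrefl)
    (fun t ht => hg0 _ (hrefl t ht))
    (fun t ht => by rw [hintegral_refl (fun r => l r * g r)]; exact hbound _ (hrefl t ht))
    _ (hrefl s hs)
  rwa [hintegral_refl, sub_sub_cancel] at this

end Gronwall

section Flow

variable {E : Type*} [NormedAddCommGroup E]

structure IsLipschitzField (ν : ℝ → E → E) (ℓ : ℝ → ℝ) (a b : ℝ) : Prop where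
  integrableOn_comp : ∀ u : ℝ → E, ContinuousOn u (Icc a b) →
    IntegrableOn (fun t => ν t (u t)) (Icc a b)
  integrableOn_rate : IntegrableOn ℓ (Icc a b)
  rate_nonneg : ∀ t ∈ Icc a b, 0 ≤ ℓ t
  norm_sub_le : ∀ t ∈ Icc a b, ∀ x y, ‖ν t x - ν t y‖ ≤ ℓ t * ‖x - y‖

variable {ν : ℝ → E → E} {ℓ : ℝ → ℝ} {a b : ℝ}

theorem IsLipschitzField.integral_rate_le (hν : IsLipschitzField ν ℓ a b) {c d : ℝ}
    (hc : c ∈ Icc a b) (hd : d ∈ Icc a b) (hcd : c ≤ d) :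
    ∫ r in c..d, ℓ r ≤ ∫ r in a..b, ℓ r := by
  have hab : a ≤ b := hc.1.trans hc.2
  refine integral_mono_interval hc.1 hcd hd.2 ?_ (hν.integrableOn_rate.mono_set
    (uIcc_subset_Icc (left_mem_Icc.2 hab) (right_mem_Icc.2 hab))).intervalIntegrable
  filter_upwards [ae_restrict_mem measurableSet_Ioc] with r hr
  exact hν.rate_nonneg r ⟨hr.1.le, hr.2⟩

variable [NormedSpace ℝ E]

theorem IsLipschitzField.of_norm_fderiv_le {β : ℝ → ℝ} (hℓ : IntegrableOn ℓ (Icc a b))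
    (hβ : IntegrableOn β (Icc a b))
    (hmeas : ∀ x, AEStronglyMeasurable (fun t => ν t x) (volume.restrict (Icc a b)))
    (hdiff : ∀ t ∈ Icc a b, Differentiable ℝ (ν t)) (hbd : ∀ t ∈ Icc a b, ∀ x, ‖ν t x‖ ≤ β t)
    (hder : ∀ t ∈ Icc a b, ∀ x, ‖fderiv ℝ (ν t) x‖ ≤ ℓ t) : IsLipschitzField ν ℓ a b where
  integrableOn_comp _ hu := Integrable.mono' hβ
    (aestronglyMeasurable_apply_of_continuous hmeas
      (ae_restrict_of_forall_mem measurableSet_Icc fun t ht => (hdiff t ht).continuous)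
      (hu.aestronglyMeasurable measurableSet_Icc))
    (ae_restrict_of_forall_mem measurableSet_Icc fun t ht => hbd t ht _)
  integrableOn_rate := hℓ
  rate_nonneg t ht := (norm_nonneg _).trans (hder t ht 0)
  norm_sub_le t ht x y := Convex.norm_image_sub_le_of_norm_fderiv_le
    (fun z _ => hdiff t ht z) (fun z _ => hder t ht z) convex_univ (mem_univ y) (mem_univ x)

theorem IsLipschitzField.norm_integral_sub_le (hν : IsLipschitzField ν ℓ a b) {u v : ℝ → E}
    (hu : ContinuousOn u (Icc a b)) (hv : ContinuousOn v (Icc a b)) {c d : ℝ}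
    (hc : c ∈ Icc a b) (hd : d ∈ Icc a b) (hcd : c ≤ d) :
    ‖∫ r in c..d, (ν r (u r) - ν r (v r))‖ ≤ ∫ r in c..d, ℓ r * ‖u r - v r‖ := by
  have hsub : uIcc c d ⊆ Icc a b := uIcc_subset_Icc hc hd
  refine (intervalIntegral.norm_integral_le_integral_norm hcd).trans <|
    integral_mono_on hcd ?_ ?_ fun r hr => hν.norm_sub_le r ⟨hc.1.trans hr.1, hr.2.trans hd.2⟩ _ _
  · exact (IntegrableOn.mono_set ((hν.integrableOn_comp u hu).sub
      (hν.integrableOn_comp v hv)).norm hsub).intervalIntegrable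
  · exact ((hν.integrableOn_rate.mul_continuousOn (hu.sub hv).norm isCompact_Icc).mono_set
      hsub).intervalIntegrable

theorem IsLipschitzField.norm_sub_le_of_eq_add_integral (hν : IsLipschitzField ν ℓ a b)
    {u v : ℝ → E} {τ : ℝ} (hτ : τ ∈ Icc a b) (hu : ContinuousOn u (Icc a b))
    (hv : ContinuousOn v (Icc a b))
    (hue : ∀ t ∈ Icc a b, u t = u τ + ∫ r in τ..t, ν r (u r))
    (hve : ∀ t ∈ Icc a b, v t = v τ + ∫ r in τ..t, ν r (v r)) :
    ∀ t ∈ Icc a b, ‖u t - v t‖ ≤ ‖u τ - v τ‖ * Real.exp (2 * ∫ r in a..b, ℓ r) := by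
  have hii : ∀ w : ℝ → E, ContinuousOn w (Icc a b) → ∀ t ∈ Icc a b,
      IntervalIntegrable (fun r => ν r (w r)) volume τ t := fun w hw t ht =>
    ((hν.integrableOn_comp w hw).mono_set (uIcc_subset_Icc hτ ht)).intervalIntegrable
  have hdiff : ∀ t ∈ Icc a b,
      u t - v t = (u τ - v τ) + ∫ r in τ..t, (ν r (u r) - ν r (v r)) := fun t ht => by
    rw [integral_sub (hii u hu t ht) (hii v hv t ht), hue t ht, hve t ht]
    abel
  have hexp : ∀ {c d}, c ∈ Icc a b → d ∈ Icc a b → c ≤ d →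
      ‖u τ - v τ‖ * Real.exp (2 * ∫ r in c..d, ℓ r)
        ≤ ‖u τ - v τ‖ * Real.exp (2 * ∫ r in a..b, ℓ r) := fun hc hd hcd =>
    mul_le_mul_of_nonneg_left
      (Real.exp_le_exp.2 (by linarith [hν.integral_rate_le hc hd hcd])) (norm_nonneg _)
  intro t ht
  rcases le_total τ t with hτt | htτ
  · have hsub : Icc τ b ⊆ Icc a b := Icc_subset_Icc_left hτ.1
    refine (le_mul_exp_integral_of_le_add_integral (g := fun r => ‖u r - v r‖)
      (hν.integrableOn_rate.mono_set hsub) (fun r hr => hν.rate_nonneg r (hsub hr))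
      ((hu.sub hv).norm.mono hsub) (fun _ _ => norm_nonneg _) (fun r hr => ?_) t
      ⟨hτt, ht.2⟩).trans (hexp hτ ht hτt)
    rw [hdiff r (hsub hr)]
    exact (norm_add_le _ _).trans
      (add_le_add le_rfl (hν.norm_integral_sub_le hu hv hτ (hsub hr) hr.1))
  · have hsub : Icc a τ ⊆ Icc a b := Icc_subset_Icc_right hτ.2
    refine (le_mul_exp_integral_of_le_add_integral_rev (g := fun r => ‖u r - v r‖)
      (hν.integrableOn_rate.mono_set hsub) (fun r hr => hν.rate_nonneg r (hsub hr))
      ((hu.sub hv).norm.mono hsub) (fun _ _ => norm_nonneg _) (fun r hr => ?_) t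
      ⟨ht.1, htτ⟩).trans (hexp ht hτ htτ)
    rw [hdiff r (hsub hr), integral_symm, ← sub_eq_add_neg]
    exact (_root_.norm_sub_le _ _).trans
      (add_le_add le_rfl (hν.norm_integral_sub_le hu hv (hsub hr) hτ hr.2))

def IsFlowOn (ν : ℝ → E → E) (ψ : ℝ → ℝ → E → E) (a b : ℝ) : Prop :=
  ∀ s ∈ Icc a b, ∀ x, ContinuousOn (fun t => ψ s t x) (Icc a b) ∧
    ∀ t ∈ Icc a b, ψ s t x = x + ∫ r in s..t, ν r (ψ s r x)

variable {ψ : ℝ → ℝ → E → E}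

theorem IsFlowOn.apply_self (hψ : IsFlowOn ν ψ a b) {s : ℝ} (hs : s ∈ Icc a b) (x : E) :
    ψ s s x = x := by
  simpa using (hψ s hs x).2 s hs

theorem IsFlowOn.eq_add_integral (hψ : IsFlowOn ν ψ a b) (hν : IsLipschitzField ν ℓ a b)
    {s τ t : ℝ} (hs : s ∈ Icc a b) (hτ : τ ∈ Icc a b) (ht : t ∈ Icc a b) (x : E) :
    ψ s t x = ψ s τ x + ∫ r in τ..t, ν r (ψ s r x) := by
  have hint := hν.integrableOn_comp _ (hψ s hs x).1
  rw [(hψ s hs x).2 t ht, (hψ s hs x).2 τ hτ, add_assoc, integral_add_adjacent_intervals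
    (hint.mono_set (uIcc_subset_Icc hs hτ)).intervalIntegrable
    (hint.mono_set (uIcc_subset_Icc hτ ht)).intervalIntegrable]

/-- Both sides solve the integral equation with value `ψ s τ x` at time `τ`. -/
theorem IsFlowOn.comp (hψ : IsFlowOn ν ψ a b) (hν : IsLipschitzField ν ℓ a b) {s τ t : ℝ}
    (hs : s ∈ Icc a b) (hτ : τ ∈ Icc a b) (ht : t ∈ Icc a b) (x : E) :
    ψ τ t (ψ s τ x) = ψ s t x := by
  have h := hν.norm_sub_le_of_eq_add_integral hτ (hψ τ hτ (ψ s τ x)).1 (hψ s hs x).1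
    (fun t' ht' => hψ.eq_add_integral hν hτ hτ ht' _)
    (fun t' ht' => hψ.eq_add_integral hν hs hτ ht' x) t ht
  rwa [hψ.apply_self hτ, sub_self, norm_zero, zero_mul, norm_le_zero_iff, sub_eq_zero] at h

theorem IsFlowOn.norm_sub_le (hψ : IsFlowOn ν ψ a b) (hν : IsLipschitzField ν ℓ a b) {s t : ℝ}
    (hs : s ∈ Icc a b) (ht : t ∈ Icc a b) (x y : E) :
    ‖ψ s t x - ψ s t y‖ ≤ Real.exp (2 * ∫ r in a..b, ℓ r) * ‖x - y‖ := by
  have h := hν.norm_sub_le_of_eq_add_integral hs (hψ s hs x).1 (hψ s hs y).1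
    (fun t' ht' => hψ.eq_add_integral hν hs hs ht' x)
    (fun t' ht' => hψ.eq_add_integral hν hs hs ht' y) t ht
  rwa [hψ.apply_self hs, hψ.apply_self hs, mul_comm] at h

theorem IsFlowOn.norm_fderiv_le (hψ : IsFlowOn ν ψ a b) (hν : IsLipschitzField ν ℓ a b)
    {s t : ℝ} (hs : s ∈ Icc a b) (ht : t ∈ Icc a b) (y : E) :
    ‖fderiv ℝ (ψ s t) y‖ ≤ Real.exp (2 * ∫ r in a..b, ℓ r) :=
  norm_fderiv_le_of_lip' ℝ (Real.exp_pos _).le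
    (Eventually.of_forall fun z => hψ.norm_sub_le hν hs ht z y)

theorem IsFlowOn.inverse_fderiv (hψ : IsFlowOn ν ψ a b) (hν : IsLipschitzField ν ℓ a b)
    (hdiff : ∀ s ∈ Icc a b, ∀ t ∈ Icc a b, Differentiable ℝ (ψ s t)) {s t : ℝ}
    (hs : s ∈ Icc a b) (ht : t ∈ Icc a b) (x : E) :
    (fderiv ℝ (ψ s t) x).inverse = fderiv ℝ (ψ t s) (ψ s t x) :=
  ContinuousLinearMap.inverse_fderiv_of_leftInverse
    (fun y => (hψ.comp hν hs ht hs y).trans (hψ.apply_self hs y))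
    (fun y => (hψ.comp hν ht hs ht y).trans (hψ.apply_self ht y))
    (hdiff s hs t ht x) (hdiff t ht s hs _)

theorem IsFlowOn.integrableOn_inverse_fderiv_apply [FiniteDimensional ℝ E]
    (hψ : IsFlowOn ν ψ a b) (hν : IsLipschitzField ν ℓ a b)
    (hdiff : ∀ s ∈ Icc a b, ∀ t ∈ Icc a b, Differentiable ℝ (ψ s t)) {s : ℝ}
    (hs : s ∈ Icc a b) (y : E) {w : ℝ → E} {β : ℝ → ℝ} (hβ : IntegrableOn β (Icc a b))
    (hw : AEStronglyMeasurable w (volume.restrict (Icc a b)))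
    (hwβ : ∀ t ∈ Icc a b, ‖w t‖ ≤ β t) :
    IntegrableOn (fun t => (fderiv ℝ (ψ s t) y).inverse (w t)) (Icc a b) := by
  have hA : AEStronglyMeasurable (fun t => fderiv ℝ (ψ s t) y) (volume.restrict (Icc a b)) :=
    aestronglyMeasurable_continuousLinearMap_of_apply fun v => aestronglyMeasurable_fderiv_apply
      (fun z => (hψ s hs z).1.aestronglyMeasurable measurableSet_Icc)
      (ae_restrict_of_forall_mem measurableSet_Icc fun t ht => hdiff s hs t ht y) v
  have hinv : AEStronglyMeasurable (fun t => (fderiv ℝ (ψ s t) y).inverse)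
      (volume.restrict (Icc a b)) := by
    simp only [← ContinuousLinearMap.ringInverse_eq_inverse]
    exact (measurable_ringInverse.comp_aemeasurable hA.aemeasurable).aestronglyMeasurable
  refine Integrable.mono' (hβ.const_mul (Real.exp (2 * ∫ r in a..b, ℓ r)))
    (isBoundedBilinearMap_apply.continuous.comp_aestronglyMeasurable (hinv.prodMk hw)) ?_
  filter_upwards [ae_restrict_mem measurableSet_Icc] with t ht
  rw [hψ.inverse_fderiv hν hdiff hs ht]
  exact (ContinuousLinearMap.le_opNorm _ _).trans (mul_le_mul (hψ.norm_fderiv_le hν ht hs _)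
    (hwβ t ht) (norm_nonneg _) (Real.exp_pos _).le)

end Flow

theorem geometric_deformed_template_derivative_general
    (n : ℕ)
    (ν η : ℝ → EuclideanSpace ℝ (Fin n) → EuclideanSpace ℝ (Fin n))
    (ℓ b : ℝ → ℝ)
    (hℓint : IntegrableOn ℓ (Icc (0:ℝ) 1))
    (hbint : IntegrableOn b (Icc (0:ℝ) 1))
    (hνmeas : ∀ x, AEStronglyMeasurable (fun t => ν t x) (volume.restrict (Icc (0:ℝ) 1)))
    (hηmeas : ∀ x, AEStronglyMeasurable (fun t => η t x) (volume.restrict (Icc (0:ℝ) 1)))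
    (hνC1 : ∀ t ∈ Icc (0:ℝ) 1, ContDiff ℝ 1 (ν t))
    (hηC1 : ∀ t ∈ Icc (0:ℝ) 1, ContDiff ℝ 1 (η t))
    (hνbd : ∀ t ∈ Icc (0:ℝ) 1, ∀ x, ‖ν t x‖ ≤ b t)
    (hηbd : ∀ t ∈ Icc (0:ℝ) 1, ∀ x, ‖η t x‖ ≤ b t)
    (hνder : ∀ t ∈ Icc (0:ℝ) 1, ∀ x, ‖fderiv ℝ (ν t) x‖ ≤ ℓ t)
    (φ : ℝ → ℝ → ℝ → EuclideanSpace ℝ (Fin n) → EuclideanSpace ℝ (Fin n))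
    (hφcont : ∀ ε : ℝ, ∀ s ∈ Icc (0:ℝ) 1, ∀ x,
      ContinuousOn (fun t => φ ε s t x) (Icc (0:ℝ) 1))
    (hφ : ∀ ε : ℝ, ∀ s ∈ Icc (0:ℝ) 1, ∀ x, ∀ t ∈ Icc (0:ℝ) 1,
      φ ε s t x = x + ∫ r in s..t, (ν r (φ ε s r x) + ε • η r (φ ε s r x)))
    (hφC1 : ∀ s ∈ Icc (0:ℝ) 1, ∀ t ∈ Icc (0:ℝ) 1, ContDiff ℝ 1 (φ 0 s t))
    (I : EuclideanSpace ℝ (Fin n) → ℝ) (hI : ContDiff ℝ 1 I)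
    (x : EuclideanSpace ℝ (Fin n))
    (hd : HasDerivAt (fun ε => φ ε 1 0 x)
      (-∫ t in (0:ℝ)..1,
        ((fderiv ℝ (φ 0 0 t) (φ 0 1 0 x)).inverse) (η t (φ 0 1 t x))) 0) :
    HasDerivAt (fun ε => I (φ ε 1 0 x))
      (-∫ t in (0:ℝ)..1,
        ⟪gradient (fun y => I (φ 0 t 0 y)) (φ 0 1 t x), η t (φ 0 1 t x)⟫) 0 := by
  have h0 : (0 : ℝ) ∈ Icc (0 : ℝ) 1 := left_mem_Icc.2 zero_le_one
  have h1 : (1 : ℝ) ∈ Icc (0 : ℝ) 1 := right_mem_Icc.2 zero_le_one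
  have hν : IsLipschitzField ν ℓ 0 1 := .of_norm_fderiv_le hℓint hbint hνmeas
    (fun t ht => (hνC1 t ht).differentiable one_ne_zero) hνbd hνder
  have hψ : IsFlowOn ν (φ 0) 0 1 := fun s hs y =>
    ⟨hφcont 0 s hs y, fun t ht => by simpa using hφ 0 s hs y t ht⟩
  have hdiff : ∀ s ∈ Icc (0 : ℝ) 1, ∀ t ∈ Icc (0 : ℝ) 1, Differentiable ℝ (φ 0 s t) :=
    fun s hs t ht => (hφC1 s hs t ht).differentiable one_ne_zero
  have hηφ : AEStronglyMeasurable (fun t => η t (φ 0 1 t x)) (volume.restrict (Icc 0 1)) :=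
    aestronglyMeasurable_apply_of_continuous hηmeas
      (ae_restrict_of_forall_mem measurableSet_Icc fun t ht => (hηC1 t ht).continuous)
      ((hφcont 0 1 h1 x).aestronglyMeasurable measurableSet_Icc)
  have hint := hψ.integrableOn_inverse_fderiv_apply hν hdiff h0 (φ 0 1 0 x) hbint hηφ
    fun t ht => hηbd t ht _
  have hIdiff : Differentiable ℝ I := hI.differentiable one_ne_zero
  refine ((hIdiff _).hasFDerivAt.comp_hasDerivAt 0 hd).congr_deriv ?_
  rw [map_neg, ← ContinuousLinearMap.intervalIntegral_comp_comm _
    ((intervalIntegrable_iff_integrableOn_Icc_of_le zero_le_one).2 hint)]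
  congr 1
  refine integral_congr fun t ht => ?_
  rw [uIcc_of_le zero_le_one] at ht
  rw [hψ.inverse_fderiv hν hdiff h0 ht, hψ.comp hν h1 h0 ht,
    inner_gradient_comp (hIdiff _) (hdiff t ht 0 h0 _), hψ.comp hν h1 ht h0]

/-- **Derivative of the geometrically deformed template.**
`ν, η` are time-dependent `C¹` vector fields with integrable bounds, `φ ε` is the
two-parameter flow of `ν + εη` with `φ 0` spatially `C¹` and all spatial derivatives
invertible, and `I : ℝⁿ → ℝ` is `C¹`.  Fix `x` and assume that `ε ↦ φ ε 1 0 x` is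
differentiable at `ε = 0` with derivative
`−∫_0^1 [Dφ(0,t)(φ(1,0,x))]⁻¹ ( η(t, φ(1,t,x)) ) dt`.  Then `ε ↦ I (φ ε 1 0 x)` (the
geometrically deformed template `𝒲(ν+εη, I)` at `x`) is differentiable at `ε = 0` with
derivative `−∫_0^1 ⟪∇(I ∘ φ(t,0,·))(φ(1,t,x)), η(t, φ(1,t,x))⟫ dt`. -/
theorem geometric_deformed_template_derivative
    (n : ℕ)
    (ν η : ℝ → EuclideanSpace ℝ (Fin n) → EuclideanSpace ℝ (Fin n))
    (ℓ b : ℝ → ℝ)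
    (hℓint : IntegrableOn ℓ (Icc (0:ℝ) 1))
    (hbint : IntegrableOn b (Icc (0:ℝ) 1))
    (hνmeas : ∀ x, AEStronglyMeasurable (fun t => ν t x) (volume.restrict (Icc (0:ℝ) 1)))
    (hηmeas : ∀ x, AEStronglyMeasurable (fun t => η t x) (volume.restrict (Icc (0:ℝ) 1)))
    (hνC1 : ∀ t ∈ Icc (0:ℝ) 1, ContDiff ℝ 1 (ν t))
    (hηC1 : ∀ t ∈ Icc (0:ℝ) 1, ContDiff ℝ 1 (η t))
    (hνbd : ∀ t ∈ Icc (0:ℝ) 1, ∀ x, ‖ν t x‖ ≤ b t)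
    (hηbd : ∀ t ∈ Icc (0:ℝ) 1, ∀ x, ‖η t x‖ ≤ b t)
    (hνder : ∀ t ∈ Icc (0:ℝ) 1, ∀ x, ‖fderiv ℝ (ν t) x‖ ≤ ℓ t)
    (hηder : ∀ t ∈ Icc (0:ℝ) 1, ∀ x, ‖fderiv ℝ (η t) x‖ ≤ ℓ t)
    (φ : ℝ → ℝ → ℝ → EuclideanSpace ℝ (Fin n) → EuclideanSpace ℝ (Fin n))
    (hφcont : ∀ ε : ℝ, ∀ s ∈ Icc (0:ℝ) 1, ∀ x,
      ContinuousOn (fun t => φ ε s t x) (Icc (0:ℝ) 1))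
    (hφ : ∀ ε : ℝ, ∀ s ∈ Icc (0:ℝ) 1, ∀ x, ∀ t ∈ Icc (0:ℝ) 1,
      φ ε s t x = x + ∫ r in s..t, (ν r (φ ε s r x) + ε • η r (φ ε s r x)))
    (hφC1 : ∀ s ∈ Icc (0:ℝ) 1, ∀ t ∈ Icc (0:ℝ) 1, ContDiff ℝ 1 (φ 0 s t))
    (hinv : ∀ s ∈ Icc (0:ℝ) 1, ∀ τ ∈ Icc (0:ℝ) 1, ∀ y,
      ∃ e : EuclideanSpace ℝ (Fin n) ≃L[ℝ] EuclideanSpace ℝ (Fin n),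
        (e : EuclideanSpace ℝ (Fin n) →L[ℝ] EuclideanSpace ℝ (Fin n))
          = fderiv ℝ (φ 0 s τ) y)
    (I : EuclideanSpace ℝ (Fin n) → ℝ) (hI : ContDiff ℝ 1 I)
    (x : EuclideanSpace ℝ (Fin n))
    (hd : HasDerivAt (fun ε => φ ε 1 0 x)
      (-∫ t in (0:ℝ)..1,
        ((fderiv ℝ (φ 0 0 t) (φ 0 1 0 x)).inverse) (η t (φ 0 1 t x))) 0) :
    HasDerivAt (fun ε => I (φ ε 1 0 x))
      (-∫ t in (0:ℝ)..1,
        ⟪gradient (fun y => I (φ 0 t 0 y)) (φ 0 1 t x), η t (φ 0 1 t x)⟫) 0 :=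
  geometric_deformed_template_derivative_general n ν η ℓ b hℓint hbint hνmeas hηmeas hνC1 hηC1 hνbd
    hηbd hνder φ hφcont hφ hφC1 I hI x hd
end
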